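/- arXiv:2112.14287 — 9 statements merged into one kernel-verified Lean document; each statement's English description precedes it below -/
import Mathlib

section
/- Let q(z) = b_n z^n + ... + b_0 be a polynomial with complex coefficients and suppose ζ is a root of q of multiplicity m ≥ 1. For every ε > 0 there exists δ > 0 such that every polynomial p(z) = a_n z^n + ... + a_0 with max_{0≤i≤n} |a_i − b_i| < δ has at least m roots (counted with multiplicity) in the open disc of radius ε centered at ζ. -/
/-! Suppose `p` had at most `k = m - 1` roots in the `ε`-disc. Among `k + 1` points spaced `2r`
apart near `ζ`, some `z` stays at distance `≥ r` from all of these roots. Write `|p|` as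
`|lc p|` times the product of the distances to its roots and compare `z` with a fixed `w` near
`ζ` where `q w ≠ 0`: each near root costs a factor `2ε / r`, each far root a factor `3`, so
`r ^ k * |p w| ≲ |p z|`. But `|p w| ≈ |q w| > 0`, while `|p z| ≤ |q z| + O(δ)` and
`|q z| = O(r ^ (k + 1))` because `ζ` is a root of order `k + 1`; this is absurd once `r`, and then
`δ`, are small. -/

open Polynomial Topology

theorem Polynomial.norm_eval_sub_eval_le {R : Type*} [NormedRing R] [NormOneClass R]
    {p q : R[X]} {n : ℕ} {η ρ : ℝ} (hp : p.natDegree ≤ n) (hq : q.natDegree ≤ n)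
    (hη : ∀ i ≤ n, ‖p.coeff i - q.coeff i‖ ≤ η) {z : R} (hz : ‖z‖ ≤ ρ) :
    ‖p.eval z - q.eval z‖ ≤ (n + 1) * max ρ 1 ^ n * η := by
  have hη0 : 0 ≤ η := (norm_nonneg _).trans (hη 0 (Nat.zero_le n))
  have hpq : (p - q).natDegree < n + 1 :=
    Nat.lt_succ_of_le ((natDegree_sub_le_of_le hp hq).trans (max_self n).le)
  rw [← eval_sub, eval_eq_sum_range' hpq]
  calc ‖∑ i ∈ Finset.range (n + 1), (p - q).coeff i * z ^ i‖
      ≤ ∑ _i ∈ Finset.range (n + 1), η * max ρ 1 ^ n := by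
        refine norm_sum_le_of_le _ fun i hi => ?_
        have hin : i ≤ n := Nat.lt_succ_iff.mp (Finset.mem_range.mp hi)
        calc ‖(p - q).coeff i * z ^ i‖ ≤ ‖p.coeff i - q.coeff i‖ * ‖z‖ ^ i :=
              (norm_mul_le _ _).trans (by rw [coeff_sub]; gcongr; exact norm_pow_le z i)
          _ ≤ η * max ρ 1 ^ n := by
              gcongr
              · exact hη i hin
              · exact (pow_le_pow_left₀ (norm_nonneg z) (hz.trans (le_max_left ρ 1)) i).trans
                  (pow_le_pow_right₀ (le_max_right ρ 1) hin)
    _ = (n + 1) * max ρ 1 ^ n * η := by simp; ring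

theorem Polynomial.exists_eval_ne_zero_of_norm_sub_le {K : Type*} [NontriviallyNormedField K]
    {q : K[X]} (hq : q ≠ 0) (ζ : K) {ρ : ℝ} (hρ : 0 < ρ) :
    ∃ w, ‖w - ζ‖ ≤ ρ ∧ q.eval w ≠ 0 := by
  by_contra! h
  refine hq (eq_zero_of_infinite_isRoot q ((infinite_of_mem_nhds ζ
    (Metric.closedBall_mem_nhds ζ hρ)).mono fun w hw => h w ?_))
  rwa [Metric.mem_closedBall, dist_eq_norm] at hw

theorem Polynomial.exists_norm_eval_le_mul_pow_of_dvd {K : Type*} [NormedField K] [ProperSpace K]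
    {q : K[X]} {ζ : K} {m : ℕ} (h : (X - C ζ) ^ m ∣ q) (ρ : ℝ) :
    ∃ G, 0 ≤ G ∧ ∀ z, ‖z - ζ‖ ≤ ρ → ‖q.eval z‖ ≤ G * ‖z - ζ‖ ^ m := by
  obtain ⟨g, rfl⟩ := h
  obtain ⟨G, hG⟩ := (isCompact_closedBall ζ ρ).exists_bound_of_continuousOn
    g.continuous.continuousOn
  refine ⟨max G 0, le_max_right _ _, fun z hz => ?_⟩
  rw [eval_mul, norm_mul, eval_pow, eval_sub, eval_X, eval_C, norm_pow, mul_comm]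
  gcongr
  exact (hG z (by rwa [Metric.mem_closedBall, dist_eq_norm])).trans (le_max_left _ _)

theorem Polynomial.norm_eval_eq_mul_prod_roots {K : Type*} [NormedField K] [IsAlgClosed K]
    (p : K[X]) (z : K) :
    ‖p.eval z‖ = ‖p.leadingCoeff‖ * (p.roots.map (‖z - ·‖)).prod := by
  rw [(IsAlgClosed.splits p).eval_eq_prod_roots, norm_mul]
  exact congrArg _ (p.roots.prod_hom' normHom (z - ·)).symm

theorem Multiset.pow_card_mul_prod_map_le {R ι : Type*} [CommSemiring R] [PartialOrder R]
    [IsOrderedRing R] {s : Multiset ι} {f g : ι → R} {a b : R} (ha : 0 ≤ a)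
    (hf : ∀ i ∈ s, 0 ≤ f i) (h : ∀ i ∈ s, a * f i ≤ b * g i) :
    a ^ card s * (s.map f).prod ≤ b ^ card s * (s.map g).prod := by
  simp only [← prod_replicate, ← map_const', ← prod_map_mul]
  exact prod_map_le_prod_map₀ _ _ (fun i hi => mul_nonneg ha (hf i hi)) h

theorem Polynomial.pow_mul_norm_eval_le_of_card_roots_le {K : Type*} [NormedField K]
    [IsAlgClosed K] (p : K[X]) {n k : ℕ} (hpn : p.natDegree ≤ n) {ζ z w : K} {ε r : ℝ}
    (hk : (p.roots.filter (fun u => ‖u - ζ‖ < ε)).card ≤ k)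
    (hz : ‖z - ζ‖ ≤ ε / 2) (hw : ‖w - ζ‖ ≤ ε / 2) (hr : 0 ≤ r) (hrε : r ≤ 2 * ε)
    (hfar : ∀ u ∈ p.roots.filter (fun u => ‖u - ζ‖ < ε), r ≤ ‖z - u‖) :
    r ^ k * ‖p.eval w‖ ≤ (2 * ε) ^ k * 3 ^ n * ‖p.eval z‖ := by
  set N := p.roots.filter (fun u => ‖u - ζ‖ < ε)
  set F := p.roots.filter (fun u => ¬‖u - ζ‖ < ε)
  have hsplit (y : K) : ‖p.eval y‖ =
      ‖p.leadingCoeff‖ * ((N.map (‖y - ·‖)).prod * (F.map (‖y - ·‖)).prod) := by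
    rw [norm_eval_eq_mul_prod_roots, ← Multiset.prod_add, ← Multiset.map_add,
      Multiset.filter_add_not]
  have hprod_nonneg (y : K) (s : Multiset K) : 0 ≤ (s.map (‖y - ·‖)).prod :=
    Multiset.prod_map_nonneg fun _ _ => norm_nonneg _
  have hN : r ^ N.card * (N.map (‖w - ·‖)).prod ≤ (2 * ε) ^ N.card * (N.map (‖z - ·‖)).prod := by
    refine Multiset.pow_card_mul_prod_map_le hr (fun _ _ => norm_nonneg _) fun u hu => ?_
    have hwu : ‖w - u‖ ≤ 2 * ε := by
      linarith [norm_sub_le_norm_sub_add_norm_sub w ζ u, norm_sub_rev ζ u,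
        (Multiset.mem_filter.mp hu).2]
    exact (mul_le_mul (hfar u hu) hwu (norm_nonneg _) (norm_nonneg _)).trans_eq (mul_comm _ _)
  have hF : (F.map (‖w - ·‖)).prod ≤ 3 ^ n * (F.map (‖z - ·‖)).prod := by
    have hF3 : 1 ^ F.card * (F.map (‖w - ·‖)).prod ≤ 3 ^ F.card * (F.map (‖z - ·‖)).prod := by
      refine Multiset.pow_card_mul_prod_map_le zero_le_one (fun _ _ => norm_nonneg _) fun u hu => ?_
      have hu_far : ε ≤ ‖u - ζ‖ := not_lt.mp (Multiset.mem_filter.mp hu).2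
      linarith [norm_sub_le_norm_sub_add_norm_sub w z u, norm_sub_le_norm_sub_add_norm_sub w ζ z,
        norm_sub_le_norm_sub_add_norm_sub u z ζ, norm_sub_rev ζ z, norm_sub_rev u z]
    have hFn : F.card ≤ n :=
      ((Multiset.card_le_card (Multiset.filter_le _ _)).trans (card_roots' p)).trans hpn
    rw [one_pow, one_mul] at hF3
    have := hprod_nonneg z F
    exact hF3.trans (by gcongr; norm_num)
  obtain ⟨d, rfl⟩ := Nat.exists_eq_add_of_le hk
  have hε : 0 ≤ 2 * ε := hr.trans hrε
  calc r ^ (N.card + d) * ‖p.eval w‖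
      = r ^ d * ‖p.leadingCoeff‖ *
          ((r ^ N.card * (N.map (‖w - ·‖)).prod) * (F.map (‖w - ·‖)).prod) := by
        rw [hsplit]; ring
    _ ≤ (2 * ε) ^ d * ‖p.leadingCoeff‖ *
          (((2 * ε) ^ N.card * (N.map (‖z - ·‖)).prod) * (3 ^ n * (F.map (‖z - ·‖)).prod)) := by
        have := hprod_nonneg w F
        have := hprod_nonneg w N
        have := hprod_nonneg z N
        gcongr
    _ = (2 * ε) ^ (N.card + d) * 3 ^ n * ‖p.eval z‖ := by rw [hsplit]; ring

theorem Finset.exists_mem_forall_le_dist {ι X : Type*} [PseudoMetricSpace X] {s : Finset ι}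
    {x : ι → X} {ρ : ℝ} (hx : (s : Set ι).Pairwise fun i j => 2 * ρ ≤ dist (x i) (x j))
    {t : Finset X} (ht : t.card < s.card) : ∃ i ∈ s, ∀ u ∈ t, ρ ≤ dist (x i) u := by
  obtain ⟨i₀, -⟩ : s.Nonempty := card_pos.mp (by omega)
  have : Nonempty X := ⟨x i₀⟩
  by_contra! h
  choose! f hft hf using h
  refine ht.not_ge (card_le_card_of_injOn f hft fun i hi j hj hij => ?_)
  by_contra hne
  linarith [hx hi hj hne, dist_triangle_right (x i) (x j) (f i), hf i hi, hij ▸ hf j hj]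

theorem Complex.exists_norm_sub_le_forall_le_norm_sub (ζ : ℂ) {r : ℝ} (hr : 0 ≤ r)
    {S : Multiset ℂ} {k : ℕ} (hS : Multiset.card S ≤ k) :
    ∃ z, ‖z - ζ‖ ≤ 2 * k * r ∧ ∀ u ∈ S, r ≤ ‖z - u‖ := by
  have hsep : ((Finset.range (k + 1) : Finset ℕ) : Set ℕ).Pairwise fun i j =>
      2 * r ≤ dist (ζ + (2 * i * r : ℝ)) (ζ + (2 * j * r : ℝ)) := by
    intro i _ j _ hij
    have h1 : (1 : ℝ) ≤ |(i : ℝ) - j| := by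
      exact_mod_cast Int.one_le_abs (sub_ne_zero.mpr (Nat.cast_injective.ne hij : (i : ℤ) ≠ j))
    rw [dist_eq_norm, add_sub_add_left_eq_sub, ← Complex.ofReal_sub, Complex.norm_real,
      Real.norm_eq_abs, show 2 * i * r - 2 * j * r = 2 * r * (i - j) by ring, abs_mul,
      abs_of_nonneg (by positivity)]
    nlinarith
  obtain ⟨i, hi, hfar⟩ := (Finset.range (k + 1)).exists_mem_forall_le_dist hsep
    (t := S.toFinset) ((Multiset.toFinset_card_le S).trans_lt (by simpa using Nat.lt_succ_of_le hS))
  refine ⟨ζ + (2 * i * r : ℝ), ?_, fun u hu => ?_⟩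
  · rw [add_sub_cancel_left, Complex.norm_real, Real.norm_of_nonneg (by positivity)]
    gcongr
    exact_mod_cast Finset.mem_range_succ_iff.mp hi
  · simpa [dist_eq_norm] using hfar u (Multiset.mem_toFinset.mpr hu)

theorem Polynomial.pow_mul_norm_eval_sub_le_of_card_roots_le {p q : ℂ[X]} {n k : ℕ}
    (hpn : p.natDegree ≤ n) {ζ w : ℂ} {ε r η G : ℝ}
    (hk : (p.roots.filter (fun u => ‖u - ζ‖ < ε)).card ≤ k)
    (hq : ∀ z, ‖z - ζ‖ ≤ ε → ‖q.eval z‖ ≤ G * ‖z - ζ‖ ^ (k + 1)) (hG : 0 ≤ G)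
    (hpq : ∀ z, ‖z - ζ‖ ≤ ε → ‖p.eval z - q.eval z‖ ≤ η)
    (hw : ‖w - ζ‖ ≤ ε / 2) (hr : 0 ≤ r) (hrε : 4 * (k + 1) * r ≤ ε) :
    r ^ k * (‖q.eval w‖ - η) ≤ (2 * ε) ^ k * 3 ^ n * (G * (2 * k * r) ^ (k + 1) + η) := by
  obtain ⟨z, hz, hfar⟩ := Complex.exists_norm_sub_le_forall_le_norm_sub ζ hr hk
  have hε : 0 ≤ ε := by linarith [norm_nonneg (w - ζ)]
  have hzε : ‖z - ζ‖ ≤ ε / 2 := by nlinarith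
  calc r ^ k * (‖q.eval w‖ - η) ≤ r ^ k * ‖p.eval w‖ := by
        gcongr
        linarith [norm_le_norm_add_norm_sub' (q.eval w) (p.eval w),
          norm_sub_rev (q.eval w) (p.eval w), hpq w (by linarith)]
    _ ≤ (2 * ε) ^ k * 3 ^ n * ‖p.eval z‖ :=
        pow_mul_norm_eval_le_of_card_roots_le p hpn hk hzε hw hr (by nlinarith) hfar
    _ ≤ (2 * ε) ^ k * 3 ^ n * (G * (2 * k * r) ^ (k + 1) + η) := by
        gcongr
        calc ‖p.eval z‖ ≤ ‖q.eval z‖ + ‖p.eval z - q.eval z‖ := norm_le_norm_add_norm_sub' _ _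
          _ ≤ G * ‖z - ζ‖ ^ (k + 1) + η := add_le_add (hq z (by linarith)) (hpq z (by linarith))
          _ ≤ G * (2 * k * r) ^ (k + 1) + η := by gcongr

theorem roots_continuity_at_least_general (n : ℕ) (q : Polynomial ℂ) (hqn : q.natDegree ≤ n)
    (ζ : ℂ) (m : ℕ) (hmult : q.rootMultiplicity ζ = m)
    (ε : ℝ) (hε : 0 < ε) :
    ∃ δ > 0, ∀ p : Polynomial ℂ, p.natDegree ≤ n →
      (∀ i ≤ n, ‖p.coeff i - q.coeff i‖ < δ) →
      m ≤ (p.roots.filter (fun z => ‖z - ζ‖ < ε)).card := by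
  rcases m with _ | k
  · exact ⟨1, one_pos, fun _ _ _ => Nat.zero_le _⟩
  have hq0 : q ≠ 0 := by rintro rfl; simp at hmult
  obtain ⟨G, hG0, hG⟩ := exists_norm_eval_le_mul_pow_of_dvd (hmult ▸ pow_rootMultiplicity_dvd q ζ) ε
  obtain ⟨w, hw, hqw⟩ := exists_eval_ne_zero_of_norm_sub_le hq0 ζ (half_pos hε)
  set c := ‖q.eval w‖
  have hc : 0 < c := norm_pos_iff.mpr hqw
  set A := (n + 1) * max (‖ζ‖ + ε) 1 ^ n
  set B := (2 * ε) ^ k * 3 ^ n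
  have hsmall (a : ℝ) {b : ℝ} (hb : 0 < b) : ∀ᶠ x in 𝓝[>] (0 : ℝ), a * x < b :=
    (tendsto_nhdsWithin_of_tendsto_nhds ((continuous_const_mul a).tendsto' 0 0 (mul_zero a))
      ).eventually_lt_const hb
  obtain ⟨r, ⟨hrε, hrG⟩, hr0⟩ : ∃ r,
      (4 * (k + 1) * r < ε ∧ B * G * (2 * k) ^ (k + 1) * r < c / 4) ∧ 0 < r :=
    (((hsmall _ hε).and (hsmall _ (by positivity))).and self_mem_nhdsWithin).exists
  obtain ⟨δ, ⟨hδc, hδr⟩, hδ0⟩ : ∃ δ, (A * δ < c / 2 ∧ B * A * δ < r ^ k * (c / 4)) ∧ 0 < δ :=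
    (((hsmall _ (by positivity)).and (hsmall _ (by positivity))).and self_mem_nhdsWithin).exists
  refine ⟨δ, hδ0, fun p hpn hclose => ?_⟩
  by_contra! hcard
  have hpq (z : ℂ) (hz : ‖z - ζ‖ ≤ ε) : ‖p.eval z - q.eval z‖ ≤ A * δ :=
    norm_eval_sub_eval_le hpn hqn (fun i hi => (hclose i hi).le)
      ((norm_le_norm_add_norm_sub' z ζ).trans (by linarith))
  have key := pow_mul_norm_eval_sub_le_of_card_roots_le hpn (Nat.lt_succ_iff.mp hcard) hG hG0
    hpq hw hr0.le hrε.le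
  have hrk : 0 < r ^ k := by positivity
  have hexpand : B * (G * (2 * k * r) ^ (k + 1) + A * δ) =
      r ^ k * (B * G * (2 * k) ^ (k + 1) * r) + B * A * δ := by ring
  linarith [mul_lt_mul_of_pos_left hrG hrk, mul_lt_mul_of_pos_left hδc hrk]

/-- Continuity of roots: if ζ is a root of q of multiplicity m ≥ 1, then any polynomial p
of degree at most n whose coefficients are δ-close to those of q has at least m roots
(with multiplicity) in the open ε-disc around ζ. -/
theorem roots_continuity_at_least (n : ℕ) (q : Polynomial ℂ) (hqn : q.natDegree ≤ n)
    (ζ : ℂ) (m : ℕ) (hm : 1 ≤ m) (hmult : q.rootMultiplicity ζ = m)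
    (ε : ℝ) (hε : 0 < ε) :
    ∃ δ > 0, ∀ p : Polynomial ℂ, p.natDegree ≤ n →
      (∀ i ≤ n, ‖p.coeff i - q.coeff i‖ < δ) →
      m ≤ (p.roots.filter (fun z => ‖z - ζ‖ < ε)).card :=
  roots_continuity_at_least_general n q hqn ζ m hmult ε hε
end

section
/- Let q be a nonzero polynomial of degree at most n with distinct roots ζ_1,…,ζ_d, and let ζ = ζ_ℓ be a root of multiplicity m. Suppose ε > 0 and, in case m ≠ deg q, additionally ε < min_{j≠ℓ} |ζ_j − ζ|. Then there exists δ > 0 such that every polynomial p of degree at most n whose coefficients are each within δ of the corresponding coefficients of q has exactly m roots (counted with multiplicity) in the open disc B(ζ, ε). -/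
/-!
Let `P k` be polynomials of degree at most `n` converging coefficientwise to `q ≠ 0`. Along an
ultrafilter the degrees stabilise at some `d`, and each of the `d` roots of `P k` either converges
or escapes to infinity, since `ℂ` is proper. Writing `X - a = -a (1 - a⁻¹ X)` for the escaping
roots exhibits `P k` as a scalar times a polynomial tending to `∏ (X - w j)`, the product over the
limits `w j` of the convergent roots; comparing leading coefficients shows that `q` is a nonzero
multiple of this product. So the convergent roots tend to the roots of `q`, with multiplicity, and
a bounded set whose frontier avoids the roots of `q` eventually contains as many roots of `P k` as
of `q`. For the disc `B(ζ, ε)` the separation hypothesis makes that number the multiplicity of `ζ`,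
and a sequence of counterexamples with `δ = 1 / (k + 1)` is ruled out.
-/

open Polynomial Filter Topology Bornology

variable {ι : Type*}

theorem Ultrafilter.exists_tendsto_nhds_or_tendsto_cobounded {X : Type*} [PseudoMetricSpace X]
    [ProperSpace X] (U : Ultrafilter ι) (f : ι → X) :
    (∃ x, Tendsto f U (𝓝 x)) ∨ Tendsto f U (cobounded X) := by
  by_cases h : ∃ B : Set X, IsBounded B ∧ f ⁻¹' B ∈ U
  · obtain ⟨B, hB, hfB⟩ := h
    obtain ⟨x, -, hx⟩ := hB.isCompact_closure.ultrafilter_le_nhds (U.map f)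
      (le_principal_iff.mpr (mem_of_superset hfB fun _ hk => subset_closure hk))
    exact .inl ⟨x, hx⟩
  · push Not at h
    refine .inr fun s hs => ?_
    have hbdd : IsBounded sᶜ := isBounded_def.mpr (by simpa using hs)
    simpa using Ultrafilter.compl_mem_iff_notMem.mpr (h sᶜ hbdd)

theorem Filter.Tendsto.eventually_mem_iff_of_notMem_frontier {X : Type*} [TopologicalSpace X]
    {l : Filter ι} {f : ι → X} {x : X} {B : Set X} (hf : Tendsto f l (𝓝 x))
    (hx : x ∉ frontier B) : ∀ᶠ k in l, f k ∈ B ↔ x ∈ B := by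
  by_cases hxB : x ∈ B
  · have hint : x ∈ interior B := by_contra fun h => hx ⟨subset_closure hxB, h⟩
    filter_upwards [hf (isOpen_interior.mem_nhds hint)] with k hk
    simp [interior_subset hk, hxB]
  · have hcl : x ∈ (closure B)ᶜ := fun h => hx ⟨h, fun hi => hxB (interior_subset hi)⟩
    filter_upwards [hf (isClosed_closure.isOpen_compl.mem_nhds hcl)] with k hk
    simpa [hxB] using fun hkB => hk (subset_closure hkB)

theorem eventually_card_filter_map_eq_of_tendsto {X κ : Type*} [TopologicalSpace X]
    [Bornology X] [Fintype κ] {l : Filter ι} {a : ι → κ → X} {T : Finset κ} {w : κ → X}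
    {B : Set X} [DecidablePred (· ∈ B)] (hT : ∀ j ∈ T, Tendsto (a · j) l (𝓝 (w j)))
    (hTc : ∀ j ∉ T, Tendsto (a · j) l (cobounded X)) (hB : IsBounded B)
    (hfront : ∀ j ∈ T, w j ∉ frontier B) :
    ∀ᶠ k in l, ((Finset.univ.val.map (a k)).filter (· ∈ B)).card =
      ((T.val.map w).filter (· ∈ B)).card := by
  have hmem : ∀ j, ∀ᶠ k in l, a k j ∈ B ↔ j ∈ T ∧ w j ∈ B := by
    intro j
    by_cases hj : j ∈ T
    · simpa [hj] using (hT j hj).eventually_mem_iff_of_notMem_frontier (hfront j hj)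
    · filter_upwards [hTc j hj hB] with k hk
      simp_all
  filter_upwards [eventually_all.mpr hmem] with k hk
  classical
  simp only [Multiset.filter_map, Multiset.card_map, Function.comp_def]
  rw [Multiset.filter_congr fun j _ => hk j, ← Finset.filter_val, ← Finset.filter_val,
    ← Finset.filter_filter, Finset.filter_univ_mem]

theorem Multiset.exists_eq_map_univ_of_card_eq {α : Type*} {s : Multiset α} {d : ℕ}
    (h : card s = d) : ∃ f : Fin d → α, s = Finset.univ.val.map f := by
  obtain rfl : s.toList.length = d := by simpa using h
  exact ⟨s.toList.get, by rw [Fin.univ_val_map, List.ofFn_get, Multiset.coe_toList]⟩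

namespace Polynomial

variable {R : Type*} {l : Filter ι}

section Semiring

variable [Semiring R] [TopologicalSpace R]

def TendstoCoeffwise (P : ι → R[X]) (l : Filter ι) (q : R[X]) : Prop :=
  ∀ i, Tendsto (fun k => (P k).coeff i) l (𝓝 (q.coeff i))

theorem TendstoCoeffwise.mono_left {l' : Filter ι} {P : ι → R[X]} {q : R[X]}
    (hP : TendstoCoeffwise P l q) (hl : l' ≤ l) : TendstoCoeffwise P l' q :=
  fun i => (hP i).mono_left hl

theorem tendstoCoeffwise_const (q : R[X]) : TendstoCoeffwise (fun _ => q) l q :=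
  fun _ => tendsto_const_nhds

theorem tendstoCoeffwise_C {a : ι → R} {b : R} (h : Tendsto a l (𝓝 b)) :
    TendstoCoeffwise (fun k => C (a k)) l (C b) := by
  intro i
  rcases eq_or_ne i 0 with rfl | hi
  · simpa using h
  · simpa [coeff_C, hi] using tendsto_const_nhds

theorem TendstoCoeffwise.mul [IsTopologicalSemiring R] {P Q : ι → R[X]} {p q : R[X]}
    (hP : TendstoCoeffwise P l p) (hQ : TendstoCoeffwise Q l q) :
    TendstoCoeffwise (fun k => P k * Q k) l (p * q) := fun i => by
  simpa only [coeff_mul] using tendsto_finsetSum _ fun x _ => (hP x.1).mul (hQ x.2)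

end Semiring

theorem tendstoCoeffwise_prod [CommSemiring R] [TopologicalSpace R] [IsTopologicalSemiring R]
    {κ : Type*} (s : Finset κ) {P : κ → ι → R[X]} {p : κ → R[X]}
    (h : ∀ j ∈ s, TendstoCoeffwise (P j) l (p j)) :
    TendstoCoeffwise (fun k => ∏ j ∈ s, P j k) l (∏ j ∈ s, p j) := by
  classical
  induction s using Finset.induction with
  | empty => simpa using tendstoCoeffwise_const 1
  | insert a s ha ih =>
    simp only [Finset.prod_insert ha]
    exact (h a (s.mem_insert_self a)).mul (ih fun j hj => h j (Finset.mem_insert_of_mem hj))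

theorem TendstoCoeffwise.sub [Ring R] [TopologicalSpace R] [IsTopologicalRing R]
    {P Q : ι → R[X]} {p q : R[X]} (hP : TendstoCoeffwise P l p) (hQ : TendstoCoeffwise Q l q) :
    TendstoCoeffwise (fun k => P k - Q k) l (p - q) := fun i => by
  simpa only [coeff_sub] using (hP i).sub (hQ i)

theorem exists_pos_forall_of_tendstoCoeffwise [SeminormedRing R] {q : R[X]} {n : ℕ}
    (hq : q.natDegree ≤ n) {S : R[X] → Prop}
    (h : ∀ P : ℕ → R[X], (∀ k, (P k).natDegree ≤ n) → TendstoCoeffwise P atTop q →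
      ∀ᶠ k in atTop, S (P k)) :
    ∃ δ > 0, ∀ p : R[X], p.natDegree ≤ n → (∀ i ≤ n, ‖p.coeff i - q.coeff i‖ < δ) → S p := by
  by_contra! hfar
  choose P hPdeg hPclose hPS using fun k : ℕ => hfar (1 / (k + 1)) Nat.one_div_pos_of_nat
  have hP : TendstoCoeffwise P atTop q := by
    intro i
    by_cases hi : i ≤ n
    · rw [tendsto_iff_norm_sub_tendsto_zero]
      exact squeeze_zero (fun _ => norm_nonneg _) (fun k => (hPclose k i hi).le)
        tendsto_one_div_add_atTop_nhds_zero_nat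
    · have hlt : n < i := not_le.mp hi
      simp only [coeff_eq_zero_of_natDegree_lt ((hPdeg _).trans_lt hlt),
        coeff_eq_zero_of_natDegree_lt (hq.trans_lt hlt), tendsto_const_nhds]
  obtain ⟨k, hk⟩ := (h P hPdeg hP).exists
  exact hPS k hk

theorem TendstoCoeffwise.eq_C_mul [Field R] [TopologicalSpace R] [IsTopologicalDivisionRing R]
    [T2Space R] [l.NeBot] {P g : ι → R[X]} {c : ι → R} {q s : R[X]}
    (hP : TendstoCoeffwise P l q) (hg : TendstoCoeffwise g l s) (hs : s.Monic)
    (hfac : ∀ᶠ k in l, P k = C (c k) * g k) : q = C (q.coeff s.natDegree) * s := by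
  have hg_lead : Tendsto (fun k => (g k).coeff s.natDegree) l (𝓝 1) :=
    hs.coeff_natDegree ▸ hg _
  have hc : Tendsto c l (𝓝 (q.coeff s.natDegree)) := by
    refine (div_one (q.coeff s.natDegree) ▸ (hP _).div hg_lead one_ne_zero).congr' ?_
    filter_upwards [hfac, hg_lead.eventually_ne one_ne_zero] with k hk hne
    change (P k).coeff _ / (g k).coeff _ = c k
    rw [hk, coeff_C_mul, mul_div_cancel_right₀ _ hne]
  ext i
  rw [coeff_C_mul]
  refine tendsto_nhds_unique (hP i) ((hc.mul (hg i)).congr' ?_)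
  filter_upwards [hfac] with k hk
  rw [hk, coeff_C_mul]

theorem X_sub_C_eq_C_mul_one_sub_C_inv_mul_X {K : Type*} [Field K] {a : K} (ha : a ≠ 0) :
    X - C a = C (-a) * (1 - C a⁻¹ * X) := by
  rw [mul_sub, mul_one, ← mul_assoc, ← C_mul, neg_mul, mul_inv_cancel₀ ha]
  simp only [map_neg, map_one]
  ring

theorem eq_C_leadingCoeff_mul_prod_of_roots_eq_map {K κ : Type*} [Field K] [IsAlgClosed K]
    [Fintype κ] {p : K[X]} {a : κ → K} (h : p.roots = Finset.univ.val.map a) :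
    p = C p.leadingCoeff * ∏ j, (X - C (a j)) := by
  conv_lhs => rw [← C_leadingCoeff_mul_prod_multiset_X_sub_C
    (IsAlgClosed.card_roots_eq_natDegree (p := p))]
  rw [h, Multiset.map_map]
  rfl

theorem eq_of_isRoot_of_rootMultiplicity_eq_natDegree [CommRing R] [IsDomain R] {q : R[X]}
    {ζ z : R} (hq : q ≠ 0) (h : q.rootMultiplicity ζ = q.natDegree) (hz : q.IsRoot z) :
    z = ζ := by
  classical
  have hcount : q.roots.count ζ = Multiset.card q.roots :=
    (Multiset.count_le_card _ _).antisymm (count_roots q ▸ h ▸ card_roots' q)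
  exact (Multiset.count_eq_card.mp hcount z ((mem_roots hq).mpr hz)).symm

theorem card_roots_filter_eq_rootMultiplicity [CommRing R] [IsDomain R] {q : R[X]} {ζ : R}
    {B : Set R} [DecidablePred (· ∈ B)] (h : ∀ z ∈ q.roots, z ∈ B ↔ z = ζ) :
    (q.roots.filter (· ∈ B)).card = q.rootMultiplicity ζ := by
  classical
  rw [Multiset.filter_congr fun z hz => (h z hz).trans eq_comm, ← Multiset.count_eq_card_filter_eq,
    count_roots]

theorem roots_eq_map_of_tendstoCoeffwise {K κ : Type*} [NormedField K] [Fintype κ] [l.NeBot]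
    {P : ι → K[X]} {q : K[X]} {c : ι → K} {a : ι → κ → K} {T : Finset κ} {w : κ → K}
    (hq : q ≠ 0) (hP : TendstoCoeffwise P l q)
    (hfac : ∀ᶠ k in l, P k = C (c k) * ∏ j, (X - C (a k j)))
    (hT : ∀ j ∈ T, Tendsto (a · j) l (𝓝 (w j)))
    (hTc : ∀ j ∉ T, Tendsto (a · j) l (cobounded K)) :
    q.roots = T.val.map w := by
  classical
  set s : K[X] := ∏ j ∈ T, (X - C (w j)) with hs_def
  set g : ι → K[X] := fun k => (∏ j ∈ T, (X - C (a k j))) * ∏ j ∈ Tᶜ, (1 - C (a k j)⁻¹ * X)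
  have hs : s.Monic := monic_prod_of_monic _ _ fun j _ => monic_X_sub_C (w j)
  -- the roots escaping to infinity contribute factors tending to `1`
  have hg : TendstoCoeffwise g l (s * ∏ _j ∈ Tᶜ, 1) := by
    refine (tendstoCoeffwise_prod T fun j hj => ?_).mul (tendstoCoeffwise_prod Tᶜ fun j hj => ?_)
    · exact (tendstoCoeffwise_const X).sub (tendstoCoeffwise_C (hT j hj))
    · have hinv : Tendsto (fun k => (a k j)⁻¹) l (𝓝 0) :=
        tendsto_inv₀_cobounded.comp (hTc j (Finset.mem_compl.mp hj))
      simpa using (tendstoCoeffwise_const 1).sub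
        ((tendstoCoeffwise_C hinv).mul (tendstoCoeffwise_const X))
  have hfac' : ∀ᶠ k in l, P k = C (c k * ∏ j ∈ Tᶜ, -a k j) * g k := by
    have hne : ∀ᶠ k in l, ∀ j ∈ Tᶜ, a k j ≠ 0 :=
      (eventually_all_finset _).mpr fun j hj =>
        hTc j (Finset.mem_compl.mp hj) (isBounded_singleton (x := 0))
    filter_upwards [hfac, hne] with k hk hk0
    rw [hk, ← Finset.prod_mul_prod_compl T, Finset.prod_congr rfl fun j hj =>
      X_sub_C_eq_C_mul_one_sub_C_inv_mul_X (hk0 j hj) (a := a k j)]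
    simp only [g, Finset.prod_mul_distrib, ← map_prod, C_mul]
    ring
  have hqs := hP.eq_C_mul (by simpa using hg) hs hfac'
  have hlead : q.coeff s.natDegree ≠ 0 := fun h0 => hq (by rw [hqs, h0, C_0, zero_mul])
  rw [hqs, roots_C_mul _ hlead, hs_def, Finset.prod_eq_multiset_prod]
  simpa [Multiset.map_map, Function.comp_def] using roots_multiset_prod_X_sub_C (T.val.map w)

section IsAlgClosed

variable {K : Type*} [NormedField K] [IsAlgClosed K] [ProperSpace K] {P : ι → K[X]} {q : K[X]}
  {n : ℕ} {B : Set K} [DecidablePred (· ∈ B)]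

theorem eventually_card_roots_filter_eq_of_ultrafilter {U : Ultrafilter ι} (hq : q ≠ 0)
    (hP : TendstoCoeffwise P U q) (hdeg : ∀ᶠ k in U, (P k).natDegree ≤ n) (hB : IsBounded B)
    (hfront : ∀ z ∈ frontier B, ¬ q.IsRoot z) :
    ∀ᶠ k in U, ((P k).roots.filter (· ∈ B)).card = (q.roots.filter (· ∈ B)).card := by
  classical
  obtain ⟨d, -, hd⟩ := (U.eventually_exists_mem_iff (Set.finite_Iic n)
    (P := fun d k => (P k).natDegree = d)).mp <| hdeg.mono fun k hk => ⟨_, hk, rfl⟩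
  have hroots (k : ι) :
      ∃ a : Fin d → K, (P k).natDegree = d → (P k).roots = Finset.univ.val.map a := by
    by_cases hk : (P k).natDegree = d
    · obtain ⟨a, ha⟩ := Multiset.exists_eq_map_univ_of_card_eq
        (IsAlgClosed.card_roots_eq_natDegree.trans hk)
      exact ⟨a, fun _ => ha⟩
    · exact ⟨0, fun h => absurd h hk⟩
  choose a ha using hroots
  set T := Finset.univ.filter fun j => ∃ x, Tendsto (a · j) U (𝓝 x)
  have hT : ∀ j ∈ T, Tendsto (a · j) U (𝓝 (limUnder U (a · j))) :=
    fun j hj => tendsto_nhds_limUnder (Finset.mem_filter.mp hj).2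
  have hTc : ∀ j ∉ T, Tendsto (a · j) U (cobounded K) := fun j hj =>
    (U.exists_tendsto_nhds_or_tendsto_cobounded _).resolve_left (by simpa [T] using hj)
  have hqroots : q.roots = T.val.map fun j => limUnder U (a · j) := by
    refine roots_eq_map_of_tendstoCoeffwise (c := fun k => (P k).leadingCoeff) hq hP ?_ hT hTc
    filter_upwards [hd] with k hk
    exact eq_C_leadingCoeff_mul_prod_of_roots_eq_map (ha k hk)
  have hlim_front : ∀ j ∈ T, limUnder U (a · j) ∉ frontier B := fun j hj hmem =>
    hfront _ hmem ((mem_roots hq).mp (hqroots ▸ Multiset.mem_map_of_mem _ hj))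
  filter_upwards [eventually_card_filter_map_eq_of_tendsto hT hTc hB hlim_front, hd]
    with k hk hkd
  rw [ha k hkd, hk, hqroots]

theorem TendstoCoeffwise.eventually_card_roots_filter_eq (hq : q ≠ 0)
    (hP : TendstoCoeffwise P l q) (hdeg : ∀ᶠ k in l, (P k).natDegree ≤ n) (hB : IsBounded B)
    (hfront : ∀ z ∈ frontier B, ¬ q.IsRoot z) :
    ∀ᶠ k in l, ((P k).roots.filter (· ∈ B)).card = (q.roots.filter (· ∈ B)).card :=
  mem_iff_ultrafilter.mpr fun _ hU => eventually_card_roots_filter_eq_of_ultrafilter hq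
    (hP.mono_left hU) (hdeg.filter_mono hU) hB hfront

end IsAlgClosed

end Polynomial

theorem roots_continuity_exact_general (n : ℕ) (q : Polynomial ℂ) (hq : q ≠ 0) (hqn : q.natDegree ≤ n)
    (ζ : ℂ) (m : ℕ) (hmult : q.rootMultiplicity ζ = m)
    (ε : ℝ) (hε : 0 < ε)
    (hsep : m ≠ q.natDegree → ∀ z : ℂ, q.IsRoot z → z ≠ ζ → ε < ‖z - ζ‖) :
    ∃ δ > 0, ∀ p : Polynomial ℂ, p.natDegree ≤ n →
      (∀ i ≤ n, ‖p.coeff i - q.coeff i‖ < δ) →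
      (p.roots.filter (fun z => ‖z - ζ‖ < ε)).card = m := by
  classical
  have hsep' (z : ℂ) (hz : q.IsRoot z) (hne : z ≠ ζ) : ε < ‖z - ζ‖ := by
    by_cases hm : m = q.natDegree
    · exact absurd (eq_of_isRoot_of_rootMultiplicity_eq_natDegree hq (hmult.trans hm) hz) hne
    · exact hsep hm z hz hne
  have hcount : (q.roots.filter (· ∈ Metric.ball ζ ε)).card = m := by
    refine hmult ▸ card_roots_filter_eq_rootMultiplicity fun z hz => ⟨fun hzB => ?_, ?_⟩
    · by_contra hne
      rw [Metric.mem_ball, dist_eq_norm] at hzB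
      exact (hsep' z ((mem_roots hq).mp hz) hne).not_gt hzB
    · rintro rfl
      exact Metric.mem_ball_self hε
  have hfront : ∀ z ∈ frontier (Metric.ball ζ ε), ¬ q.IsRoot z := by
    rw [frontier_ball ζ hε.ne']
    intro z hz hroot
    rw [mem_sphere_iff_norm] at hz
    exact (hsep' z hroot (by rintro rfl; simp [hε.ne] at hz)).ne' hz
  refine exists_pos_forall_of_tendstoCoeffwise hqn fun P hPdeg hP => ?_
  filter_upwards [hP.eventually_card_roots_filter_eq hq (.of_forall hPdeg) Metric.isBounded_ball
    hfront] with k hk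
  rw [← hcount, ← hk]
  exact congrArg _ (Multiset.filter_congr fun z _ => by rw [Metric.mem_ball, dist_eq_norm])

/-- Exactly m roots of a nearby polynomial lie in B(ζ, ε) where ζ is a root of q of
multiplicity m, provided (when m ≠ deg q) that ε is smaller than the distance from ζ to
any other root of q. -/
theorem roots_continuity_exact (n : ℕ) (q : Polynomial ℂ) (hq : q ≠ 0) (hqn : q.natDegree ≤ n)
    (ζ : ℂ) (hζ : q.IsRoot ζ) (m : ℕ) (hmult : q.rootMultiplicity ζ = m)
    (ε : ℝ) (hε : 0 < ε)
    (hsep : m ≠ q.natDegree → ∀ z : ℂ, q.IsRoot z → z ≠ ζ → ε < ‖z - ζ‖) :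
    ∃ δ > 0, ∀ p : Polynomial ℂ, p.natDegree ≤ n →
      (∀ i ≤ n, ‖p.coeff i - q.coeff i‖ < δ) →
      (p.roots.filter (fun z => ‖z - ζ‖ < ε)).card = m :=
  roots_continuity_exact_general n q hq hqn ζ m hmult ε hε hsep
end

section
/- Let q be a nonzero polynomial of degree at most n with distinct roots ζ_1,…,ζ_d, where ζ_j has multiplicity m_j. Suppose ε > 0 and, when d > 1, additionally ε < min_{i≠j} |ζ_i − ζ_j|. Then there exists δ > 0 such that every polynomial p of degree at most n whose coefficients are each within δ of those of q has exactly m_j roots (with multiplicity) in the open disc B(ζ_j, ε), simultaneously for every j = 1,…,d. -/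
/-!
The count is local, so it suffices to work near one root `ζ`, by induction on `n`. If `ζ` is not
a root of `q`, then `q` is bounded away from zero on the closed `ε`-ball, and since evaluation
converges uniformly on compact sets as the coefficients converge, `p` has no root there either.
If `ζ` is a root, the minimum modulus principle gives a root `z` of `p` close to `ζ`; synthetic
division is continuous in the coefficients and the root, so `p /ₘ (X - z)` is close to
`q /ₘ (X - ζ)`, and the induction hypothesis counts the remaining roots. Roots of `p` that escape
to infinity when `p` has larger degree than `q` never enter the ball.
-/

open Filter Topology Metric

theorem Complex.exists_mem_ball_eq_zero_of_norm_lt {E : Type*} [NormedAddCommGroup E]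
    [NormedSpace ℂ E] [Nontrivial E] {f : E → ℂ} {c : E} {r m : ℝ} (hr : 0 < r)
    (hf : DiffContOnCl ℂ f (ball c r)) (hc : ‖f c‖ < m) (hm : ∀ z ∈ sphere c r, m ≤ ‖f z‖) :
    ∃ z ∈ ball c r, f z = 0 := by
  by_contra! hball
  have hm0 : 0 < m := (norm_nonneg _).trans_lt hc
  have hne : ∀ z ∈ closedBall c r, f z ≠ 0 := by
    intro z hz
    rcases (mem_closedBall.1 hz).lt_or_eq with hlt | heq
    · exact hball z hlt
    · exact norm_pos_iff.1 (hm0.trans_le (hm z heq))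
  have hinv : DiffContOnCl ℂ (fun z => (f z)⁻¹) (ball c r) := by
    refine ⟨hf.differentiableOn.inv fun z hz => hball z hz, ?_⟩
    have hcont := hf.continuousOn
    rw [closure_ball c hr.ne'] at hcont ⊢
    exact hcont.inv₀ hne
  have hbound : ‖(f c)⁻¹‖ ≤ m⁻¹ := by
    refine Complex.norm_le_of_forall_mem_frontier_norm_le isBounded_ball hinv (fun z hz => ?_)
      (subset_closure (mem_ball_self hr))
    rw [frontier_ball c hr.ne'] at hz
    rw [norm_inv]
    exact inv_anti₀ hm0 (hm z hz)
  rw [norm_inv] at hbound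
  exact hc.not_ge ((inv_le_inv₀ (norm_pos_iff.2 (hball c (mem_ball_self hr))) hm0).1 hbound)

namespace Polynomial

section Division

variable {R : Type*} [CommRing R] [IsDomain R] {p : R[X]} {z : R}

theorem roots_eq_cons_roots_divByMonic (hp : p ≠ 0) (hz : p.IsRoot z) :
    p.roots = z ::ₘ (p /ₘ (X - C z)).roots := by
  have hfac := mul_divByMonic_eq_iff_isRoot.2 hz
  conv_lhs => rw [← hfac]
  rw [roots_mul (hfac.symm ▸ hp), roots_X_sub_C, Multiset.singleton_add]

theorem rootMultiplicity_eq_rootMultiplicity_divByMonic_add_one (hp : p ≠ 0)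
    (hz : p.IsRoot z) :
    p.rootMultiplicity z = (p /ₘ (X - C z)).rootMultiplicity z + 1 := by
  have hfac := mul_divByMonic_eq_iff_isRoot.2 hz
  conv_lhs => rw [← hfac]
  rw [rootMultiplicity_mul (hfac.symm ▸ hp), rootMultiplicity_X_sub_C_self, add_comm]

end Division

section CoeffTopology

variable {R : Type*}

def coeffVec [Semiring R] (n : ℕ) (p : R[X]) : Fin (n + 1) → R := fun i => p.coeff i

def coeffNhds [Semiring R] [TopologicalSpace R] (n : ℕ) (q : R[X]) : Filter R[X] :=
  comap (coeffVec n) (𝓝 (coeffVec n q)) ⊓ 𝓟 {p | p.natDegree ≤ n}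

variable {n : ℕ}

theorem tendsto_coeffVec_coeffNhds [Semiring R] [TopologicalSpace R] (q : R[X]) :
    Tendsto (coeffVec n) (coeffNhds n q) (𝓝 (coeffVec n q)) :=
  tendsto_comap.mono_left inf_le_left

theorem eventually_natDegree_le_coeffNhds [Semiring R] [TopologicalSpace R] (q : R[X]) :
    ∀ᶠ p in coeffNhds n q, p.natDegree ≤ n :=
  mem_inf_of_right (mem_principal_self _)

theorem eventually_coeffNhds_iff [SeminormedRing R] {q : R[X]} {P : R[X] → Prop} :
    (∀ᶠ p in coeffNhds n q, P p) ↔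
      ∃ δ > 0, ∀ p : R[X], p.natDegree ≤ n → (∀ i ≤ n, ‖p.coeff i - q.coeff i‖ < δ) → P p := by
  simp only [coeffNhds, eventually_inf_principal, eventually_comap, Metric.eventually_nhds_iff]
  refine exists_congr fun δ => and_congr_right fun hδ => ⟨?_, ?_⟩
  · intro h p hpn hclose
    refine h ((dist_pi_lt_iff hδ).2 fun i => ?_) p rfl hpn
    simpa [coeffVec, dist_eq_norm] using hclose i (Nat.lt_succ_iff.1 i.2)
  · rintro h _ hdist p rfl hpn
    refine h p hpn fun i hi => ?_
    simpa [coeffVec, dist_eq_norm] using (dist_pi_lt_iff hδ).1 hdist ⟨i, Nat.lt_succ_of_le hi⟩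

theorem eval_eq_sum_coeffVec [CommSemiring R] {p : R[X]} (hp : p.natDegree ≤ n) (z : R) :
    p.eval z = ∑ i, coeffVec n p i * z ^ (i : ℕ) := by
  rw [eval_eq_sum_range' (Nat.lt_succ_of_le hp), ← Fin.sum_univ_eq_sum_range]
  rfl

theorem tendstoUniformlyOn_eval_coeffNhds [CommSemiring R] [UniformSpace R]
    [IsTopologicalSemiring R] {q : R[X]} (hqn : q.natDegree ≤ n) {K : Set R} (hK : IsCompact K) :
    TendstoUniformlyOn (fun p z => p.eval z) q.eval (coeffNhds n q) K := by
  set G : (Fin (n + 1) → R) → R → R := fun v z => ∑ i, v i * z ^ (i : ℕ)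
  have hG : ContinuousOn (Function.uncurry G) (Set.univ ×ˢ K) := by
    refine Continuous.continuousOn ?_
    simp only [G, Function.uncurry_def]
    fun_prop
  intro u hu
  obtain ⟨V, hV, hVu⟩ := hK.mem_uniformity_of_prod hG (Set.mem_univ (coeffVec n q))
    (tendsto_swap_uniformity hu)
  rw [nhdsWithin_univ] at hV
  filter_upwards [tendsto_coeffVec_coeffNhds q hV, eventually_natDegree_le_coeffNhds q]
    with p hpV hpn z hz
  rw [eval_eq_sum_coeffVec hqn, eval_eq_sum_coeffVec hpn]
  exact hVu _ hpV z hz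

theorem coeffVec_divByMonic_X_sub_C [CommRing R] {p : R[X]} (hp : p.natDegree ≤ n + 1) (z : R) :
    coeffVec n (p /ₘ (X - C z)) = fun k : Fin (n + 1) =>
      ∑ i ∈ Finset.univ.filter (fun i : Fin (n + 2) => (k : ℕ) < i),
        z ^ ((i : ℕ) - (k + 1)) * coeffVec (n + 1) p i := by
  ext k
  have hIcc : Finset.Icc ((k : ℕ) + 1) (n + 1) =
      (Finset.range (n + 2)).filter fun i => (k : ℕ) < i := by
    ext i; simp only [Finset.mem_Icc, Finset.mem_filter, Finset.mem_range]; omega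
  simp only [coeffVec]
  rw [coeff_divByMonic_X_sub_C, Finset.sum_filter, Fin.sum_univ_eq_sum_range
    (fun i => if (k : ℕ) < i then z ^ (i - (k + 1)) * p.coeff i else 0), ← Finset.sum_filter,
    ← hIcc]
  refine Finset.sum_subset (Finset.Icc_subset_Icc_right hp) fun i hi hni => ?_
  rw [coeff_eq_zero_of_natDegree_lt, mul_zero]
  simp only [Finset.mem_Icc] at hi hni
  omega

theorem tendsto_divByMonic_X_sub_C_coeffNhds [CommRing R] [TopologicalSpace R]
    [IsTopologicalRing R] {q : R[X]} (hqn : q.natDegree ≤ n + 1) (ζ : R) :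
    Tendsto (fun x : R[X] × R => x.1 /ₘ (X - C x.2)) (coeffNhds (n + 1) q ×ˢ 𝓝 ζ)
      (coeffNhds n (q /ₘ (X - C ζ))) := by
  set D : (Fin (n + 2) → R) × R → Fin (n + 1) → R := fun x k =>
    ∑ i ∈ Finset.univ.filter (fun i : Fin (n + 2) => (k : ℕ) < i),
      x.2 ^ ((i : ℕ) - (k + 1)) * x.1 i
  have hD : Continuous D := by
    refine continuous_pi fun k => continuous_finsetSum _ fun i _ => ?_
    fun_prop
  have hdeg : ∀ᶠ x in coeffNhds (n + 1) q ×ˢ 𝓝 ζ, x.1.natDegree ≤ n + 1 :=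
    (eventually_natDegree_le_coeffNhds q).prod_inl _
  refine tendsto_inf.2 ⟨tendsto_comap_iff.2 ?_, tendsto_principal.2 ?_⟩
  · have hlim : coeffVec n (q /ₘ (X - C ζ)) = D (coeffVec (n + 1) q, ζ) :=
      coeffVec_divByMonic_X_sub_C hqn ζ
    rw [hlim]
    have hx : Tendsto (fun x : R[X] × R => (coeffVec (n + 1) x.1, x.2))
        (coeffNhds (n + 1) q ×ˢ 𝓝 ζ) (𝓝 (coeffVec (n + 1) q, ζ)) :=
      ((tendsto_coeffVec_coeffNhds q).comp tendsto_fst).prodMk_nhds tendsto_snd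
    refine ((hD.tendsto _).comp hx).congr' ?_
    filter_upwards [hdeg] with x hx
    exact (coeffVec_divByMonic_X_sub_C hx x.2).symm
  · filter_upwards [hdeg] with x hx
    nontriviality R
    rw [natDegree_divByMonic _ (monic_X_sub_C _), natDegree_X_sub_C]
    omega

theorem eventually_ne_zero_coeffNhds [Semiring R] [TopologicalSpace R] [T1Space R] {q : R[X]}
    (hq : q ≠ 0) (hqn : q.natDegree ≤ n) : ∀ᶠ p in coeffNhds n q, p ≠ 0 := by
  have hlead : Tendsto (fun p => coeffVec n p ⟨q.natDegree, Nat.lt_succ_of_le hqn⟩)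
      (coeffNhds n q) (𝓝 q.leadingCoeff) :=
    ((continuous_apply (⟨q.natDegree, Nat.lt_succ_of_le hqn⟩ : Fin (n + 1))).tendsto
      (coeffVec n q)).comp (tendsto_coeffVec_coeffNhds q)
  filter_upwards [hlead.eventually_ne (leadingCoeff_ne_zero.2 hq)] with p hp hp0
  simp [hp0, coeffVec] at hp

theorem eventually_coeffNhds_forall_not_isRoot [NormedCommRing R] {q : R[X]}
    (hqn : q.natDegree ≤ n) {K : Set R} (hK : IsCompact K) (hqK : ∀ z ∈ K, ¬ q.IsRoot z) :
    ∀ᶠ p in coeffNhds n q, ∀ z ∈ K, ¬ p.IsRoot z := by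
  obtain ⟨m, hm0, hm⟩ := hK.exists_forall_le' q.continuous.norm.continuousOn
    fun z hz => norm_pos_iff.2 (hqK z hz)
  filter_upwards [Metric.tendstoUniformlyOn_iff.1 (tendstoUniformlyOn_eval_coeffNhds hqn hK) m hm0]
    with p hp z hz hpz
  have := hp z hz
  rw [dist_eq_norm, hpz.eq_zero, sub_zero] at this
  exact (hm z hz).not_gt this

end CoeffTopology

variable {n : ℕ}

theorem eventually_coeffNhds_exists_isRoot_mem_ball {q : ℂ[X]} (hq : q ≠ 0)
    (hqn : q.natDegree ≤ n) {ζ : ℂ} (hζ : q.IsRoot ζ) {η : ℝ} (hη : 0 < η) :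
    ∀ᶠ p in coeffNhds n q, ∃ z ∈ ball ζ η, p.IsRoot z := by
  -- `r` avoids the distances from `ζ` to the roots of `q`, so `q` has no zero on `sphere ζ r`.
  obtain ⟨r, ⟨hr0, hrη⟩, hr⟩ :=
    (Set.Ioo_infinite hη).exists_notMem_finset (q.roots.toFinset.image fun w => ‖w - ζ‖)
  have hsphere : ∀ z ∈ sphere ζ r, 0 < ‖q.eval z‖ := by
    refine fun z hz => norm_pos_iff.2 fun hqz => hr (Finset.mem_image.2 ⟨z, ?_, ?_⟩)
    · simpa [hq] using hqz
    · simpa using hz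
  obtain ⟨m, hm0, hm⟩ := (isCompact_sphere ζ r).exists_forall_le'
    q.continuous.norm.continuousOn hsphere
  filter_upwards [Metric.tendstoUniformlyOn_iff.1
    (tendstoUniformlyOn_eval_coeffNhds hqn (isCompact_closedBall ζ r)) (m / 2) (half_pos hm0)]
    with p hp
  have hclose : ∀ z ∈ closedBall ζ r, ‖q.eval z - p.eval z‖ < m / 2 := by
    simpa only [dist_eq_norm] using hp
  have hcenter : ‖p.eval ζ‖ < m / 2 := by
    simpa [hζ.eq_zero] using hclose ζ (mem_closedBall_self hr0.le)
  have hedge : ∀ z ∈ sphere ζ r, m / 2 ≤ ‖p.eval z‖ := fun z hz => by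
    linarith [hm z hz, hclose z (sphere_subset_closedBall hz),
      norm_sub_norm_le (q.eval z) (p.eval z)]
  obtain ⟨z, hz, hpz⟩ := Complex.exists_mem_ball_eq_zero_of_norm_lt hr0
    p.differentiable.diffContOnCl hcenter hedge
  exact ⟨z, ball_subset_ball hrη.le hz, hpz⟩

theorem eventually_coeffNhds_card_roots_filter_eq_of_divByMonic {q : ℂ[X]} (hq : q ≠ 0)
    (hqn : q.natDegree ≤ n + 1) {ζ : ℂ} (hζ : q.IsRoot ζ) {ε : ℝ} (hε : 0 < ε)
    (hquot : ∀ᶠ p in coeffNhds n (q /ₘ (X - C ζ)),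
      (p.roots.filter fun z => ‖z - ζ‖ < ε).card = (q /ₘ (X - C ζ)).rootMultiplicity ζ) :
    ∀ᶠ p in coeffNhds (n + 1) q,
      (p.roots.filter fun z => ‖z - ζ‖ < ε).card = q.rootMultiplicity ζ := by
  obtain ⟨P, hP, Z, hZ, hPZ⟩ :=
    eventually_prod_iff.1 ((tendsto_divByMonic_X_sub_C_coeffNhds hqn ζ).eventually hquot)
  obtain ⟨η, hη, hηZ⟩ := Metric.eventually_nhds_iff.1 hZ
  filter_upwards [hP, eventually_ne_zero_coeffNhds hq hqn,
    eventually_coeffNhds_exists_isRoot_mem_ball hq hqn hζ (lt_min hη hε)]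
    with p hpP hp0 ⟨z, hz, hpz⟩
  rw [mem_ball, lt_min_iff] at hz
  rw [roots_eq_cons_roots_divByMonic hp0 hpz, Multiset.filter_cons_of_pos _ (by
      rw [← dist_eq_norm]; exact hz.2), Multiset.card_cons, hPZ hpP (hηZ hz.1),
    rootMultiplicity_eq_rootMultiplicity_divByMonic_add_one hq hζ]

theorem eventually_coeffNhds_card_roots_filter_eq_of_not_isRoot {𝕜 : Type*} [NormedField 𝕜]
    [ProperSpace 𝕜] {q : 𝕜[X]} (hqn : q.natDegree ≤ n) {ζ : 𝕜} (hζ : ¬ q.IsRoot ζ) {ε : ℝ}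
    (hsep : ∀ w, q.IsRoot w → w ≠ ζ → ε < ‖w - ζ‖) :
    ∀ᶠ p in coeffNhds n q,
      (p.roots.filter fun z => ‖z - ζ‖ < ε).card = q.rootMultiplicity ζ := by
  have hball : ∀ z ∈ closedBall ζ ε, ¬ q.IsRoot z := by
    intro z hz hqz
    obtain rfl | hne := eq_or_ne z ζ
    · exact hζ hqz
    · exact (hsep z hqz hne).not_ge (mem_closedBall_iff_norm.1 hz)
  filter_upwards [eventually_coeffNhds_forall_not_isRoot hqn (isCompact_closedBall ζ ε) hball]
    with p hp
  rw [rootMultiplicity_eq_zero hζ, Multiset.card_eq_zero, Multiset.filter_eq_nil]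
  exact fun z hz hzε => hp z (mem_closedBall_iff_norm.2 hzε.le) (isRoot_of_mem_roots hz)

theorem eventually_coeffNhds_card_roots_filter_eq {q : ℂ[X]} (hq : q ≠ 0)
    (hqn : q.natDegree ≤ n) {ζ : ℂ} {ε : ℝ} (hε : 0 < ε)
    (hsep : ∀ w, q.IsRoot w → w ≠ ζ → ε < ‖w - ζ‖) :
    ∀ᶠ p in coeffNhds n q,
      (p.roots.filter fun z => ‖z - ζ‖ < ε).card = q.rootMultiplicity ζ := by
  induction n generalizing q with
  | zero =>
    refine eventually_coeffNhds_card_roots_filter_eq_of_not_isRoot hqn (fun hζ => ?_) hsep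
    exact (natDegree_pos_iff_degree_pos.2 (degree_pos_of_root hq hζ)).ne' (Nat.le_zero.1 hqn)
  | succ n ih =>
    by_cases hζ : q.IsRoot ζ
    · have hfac := mul_divByMonic_eq_iff_isRoot.2 hζ
      have hquot : q /ₘ (X - C ζ) ≠ 0 := fun h => hq (by rw [← hfac, h, mul_zero])
      have hquotn : (q /ₘ (X - C ζ)).natDegree ≤ n := by
        rw [natDegree_divByMonic _ (monic_X_sub_C ζ), natDegree_X_sub_C]
        omega
      refine eventually_coeffNhds_card_roots_filter_eq_of_divByMonic hq hqn hζ hε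
        (ih hquot hquotn fun w hw => hsep w (hw.dvd ⟨X - C ζ, by rw [mul_comm, hfac]⟩))
    · exact eventually_coeffNhds_card_roots_filter_eq_of_not_isRoot hqn hζ hsep

end Polynomial

open Polynomial

/-- Root separation without ∞: if ε > 0 and (when q has more than one distinct root)
ε is smaller than the minimal distance between distinct roots of q, then every polynomial
p of degree at most n with coefficients δ-close to those of q has exactly m_j roots
(with multiplicity) in B(ζ_j, ε), simultaneously for every distinct root ζ_j of q
of multiplicity m_j. -/
theorem roots_separation_no_infinity (n : ℕ) (q : Polynomial ℂ) (hq : q ≠ 0)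
    (hqn : q.natDegree ≤ n) (ε : ℝ) (hε : 0 < ε)
    (hsep : ∀ z w : ℂ, q.IsRoot z → q.IsRoot w → z ≠ w → ε < ‖z - w‖) :
    ∃ δ > 0, ∀ p : Polynomial ℂ, p.natDegree ≤ n →
      (∀ i ≤ n, ‖p.coeff i - q.coeff i‖ < δ) →
      ∀ ζ : ℂ, q.IsRoot ζ →
        (p.roots.filter (fun z => ‖z - ζ‖ < ε)).card = q.rootMultiplicity ζ := by
  have hall : ∀ᶠ p in coeffNhds n q, ∀ ζ ∈ q.roots.toFinset,
      (p.roots.filter fun z => ‖z - ζ‖ < ε).card = q.rootMultiplicity ζ :=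
    (Finset.eventually_all _).2 fun ζ hζ => eventually_coeffNhds_card_roots_filter_eq hq hqn hε
      fun w hw hwζ => hsep w ζ hw (isRoot_of_mem_roots (Multiset.mem_toFinset.1 hζ)) hwζ
  obtain ⟨δ, hδ, hδp⟩ := eventually_coeffNhds_iff.1 hall
  exact ⟨δ, hδ, fun p hpn hclose ζ hζ => hδp p hpn hclose ζ (by simpa [hq] using hζ)⟩
end

section
/- Let q be a nonzero polynomial of degree at most n and let ε > 0. Then there exists δ > 0 such that for every polynomial p of degree at most n whose coefficients are each within δ of the corresponding coefficients of q, the polynomial p has at least deg p − deg q roots λ (counted with multiplicity) with |λ| > 1/ε. -/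
/-!
Let `S` be the roots of `p` in the closed disc of radius `r = 1/ε`, and `g = ∏_{z ∈ S} (X - z)`,
a monic factor of `p = g * h` whose coefficients are at most `(1 + r)^n`. If `#S > deg q`, every
coefficient of `p` from index `#S` on is `δ`-small, since those of `q` vanish there. Solving
`p = g * h` for the coefficients of `h` from the top down shows that they are all `O(δ)`, hence so
are those of `p`. But the coefficient of `p` at `deg q` is `δ`-close to the leading coefficient of
`q`. So `#S ≤ deg q`, and the other `deg p - #S` roots lie outside the disc.
-/

open Polynomial Finset

namespace Polynomial

variable {R : Type*}

theorem norm_coeff_multiset_prod_X_sub_C_le [NormedCommRing R] [NormOneClass R]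
    {S : Multiset R} {r : ℝ} (hS : ∀ z ∈ S, ‖z‖ ≤ r) (j : ℕ) :
    ‖(S.map fun z => X - C z).prod.coeff j‖ ≤ (1 + r) ^ S.card := by
  induction S using Multiset.induction generalizing j with
  | empty => by_cases hj : j = 0 <;> simp [coeff_one, hj]
  | cons a S ih =>
    have ha : ‖a‖ ≤ r := hS a (Multiset.mem_cons_self a S)
    have ih := ih fun z hz => hS z (Multiset.mem_cons_of_mem hz)
    set g := (S.map fun z => X - C z).prod
    have hXg : ‖(X * g).coeff j‖ ≤ (1 + r) ^ S.card := by
      cases j with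
      | zero => simpa using pow_nonneg (by linarith [norm_nonneg a]) _
      | succ k => simpa only [coeff_X_mul] using ih k
    have hag : ‖a * g.coeff j‖ ≤ r * (1 + r) ^ S.card :=
      (norm_mul_le _ _).trans (mul_le_mul ha (ih j) (norm_nonneg _) ((norm_nonneg a).trans ha))
    calc ‖(((a ::ₘ S).map fun z => X - C z).prod).coeff j‖
        = ‖(X * g).coeff j - a * g.coeff j‖ := by simp [g, sub_mul, coeff_C_mul]
      _ ≤ ‖(X * g).coeff j‖ + ‖a * g.coeff j‖ := norm_sub_le _ _
      _ ≤ (1 + r) ^ (a ::ₘ S).card := by rw [Multiset.card_cons, pow_succ]; linarith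

theorem Monic.coeff_mul_add_natDegree [Semiring R] {g : R[X]} (hg : g.Monic) (h : R[X]) (s : ℕ) :
    (g * h).coeff (s + g.natDegree) =
      h.coeff s + ∑ i ∈ range g.natDegree, g.coeff i * h.coeff (s + g.natDegree - i) := by
  rw [coeff_mul, Nat.sum_antidiagonal_eq_sum_range_succ_mk, Nat.succ_eq_add_one,
    show s + g.natDegree + 1 = g.natDegree + (s + 1) by omega, sum_range_add, add_comm]
  congr 1
  rw [sum_eq_single 0]
  · simp [hg.coeff_natDegree]
  · intro k _ hk
    rw [coeff_eq_zero_of_natDegree_lt (by omega), zero_mul]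
  · simp

theorem Monic.norm_coeff_le_of_norm_coeff_mul_le [NormedRing R] {g h : R[X]} (hg : g.Monic)
    {B δ : ℝ} (hgB : ∀ i, ‖g.coeff i‖ ≤ B) (hgh : ∀ i, g.natDegree ≤ i → ‖(g * h).coeff i‖ ≤ δ)
    (s : ℕ) : ‖h.coeff s‖ ≤ δ * (1 + g.natDegree * B) ^ h.natDegree := by
  set e := g.natDegree
  have hB : 0 ≤ B := (norm_nonneg _).trans (hgB 0)
  have hδ : 0 ≤ δ := (norm_nonneg _).trans (hgh e le_rfl)
  have step : ∀ s M, (∀ k, s < k → ‖h.coeff k‖ ≤ M) → ‖h.coeff s‖ ≤ δ + e * B * M := by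
    intro s M hM
    calc ‖h.coeff s‖
        = ‖(g * h).coeff (s + e) - ∑ i ∈ range e, g.coeff i * h.coeff (s + e - i)‖ := by
          rw [hg.coeff_mul_add_natDegree, add_sub_cancel_right]
      _ ≤ δ + ∑ i ∈ range e, B * M := by
          refine (norm_sub_le _ _).trans (add_le_add (hgh _ (by omega)) ?_)
          refine (norm_sum_le _ _).trans (sum_le_sum fun i hi => ?_)
          exact (norm_mul_le _ _).trans
            (mul_le_mul (hgB i) (hM _ (by have := mem_range.1 hi; omega)) (norm_nonneg _) hB)
      _ = δ + e * B * M := by simp [mul_assoc]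
  have key : ∀ t s, h.natDegree ≤ s + t → ‖h.coeff s‖ ≤ δ * (1 + e * B) ^ t := by
    intro t
    induction t with
    | zero =>
      intro s hs
      simpa using step s 0 fun k hk => by rw [coeff_eq_zero_of_natDegree_lt (by omega), norm_zero]
    | succ t ih =>
      intro s hs
      refine (step s _ fun k hk => ih k (by omega)).trans ?_
      have : 1 ≤ (1 + e * B) ^ t := one_le_pow₀ (le_add_of_nonneg_right (by positivity))
      rw [pow_succ]
      nlinarith
  exact key _ s (Nat.le_add_left _ _)

theorem norm_coeff_mul_le [NormedRing R] {f g : R[X]} {A B : ℝ} (hf : ∀ i, ‖f.coeff i‖ ≤ A)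
    (hg : ∀ i, ‖g.coeff i‖ ≤ B) (j : ℕ) : ‖(f * g).coeff j‖ ≤ (j + 1) * (A * B) := by
  rw [coeff_mul]
  refine (norm_sum_le _ _).trans ?_
  calc ∑ x ∈ antidiagonal j, ‖f.coeff x.1 * g.coeff x.2‖
      ≤ ∑ _x ∈ antidiagonal j, A * B := sum_le_sum fun x _ => (norm_mul_le _ _).trans
          (mul_le_mul (hf _) (hg _) (norm_nonneg _) ((norm_nonneg _).trans (hf 0)))
    _ = (j + 1) * (A * B) := by simp

theorem norm_coeff_le_of_le_roots [NormedCommRing R] [NormOneClass R] [IsDomain R] {n : ℕ}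
    {p : R[X]} (hpn : p.natDegree ≤ n) {S : Multiset R} (hSp : S ≤ p.roots) {r δ : ℝ}
    (hr : 0 ≤ r) (hS : ∀ z ∈ S, ‖z‖ ≤ r) (hp : ∀ i, S.card ≤ i → ‖p.coeff i‖ ≤ δ) {j : ℕ}
    (hj : j ≤ n) : ‖p.coeff j‖ ≤ (n + 1) * (1 + r) ^ n * (1 + n * (1 + r) ^ n) ^ n * δ := by
  set g := (S.map fun z => X - C z).prod
  have hg : g.Monic := monic_multiset_prod_of_monic _ _ fun z _ => monic_X_sub_C z
  have hgS : g.natDegree = S.card := natDegree_multiset_prod_X_sub_C_eq_card S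
  obtain ⟨h, rfl⟩ : g ∣ p :=
    (Multiset.prod_dvd_prod_of_le (Multiset.map_le_map hSp)).trans (prod_multiset_X_sub_C_dvd p)
  have hδ : 0 ≤ δ := (norm_nonneg _).trans (hp _ le_rfl)
  have hr1 : 1 ≤ 1 + r := by linarith
  have hSn : S.card ≤ n := (Multiset.card_le_card hSp).trans ((card_roots' _).trans hpn)
  have hhn : h.natDegree ≤ n := by
    rcases eq_or_ne h 0 with rfl | hh
    · simp
    · rw [hg.natDegree_mul' hh] at hpn; omega
  have hgB : ∀ i, ‖g.coeff i‖ ≤ (1 + r) ^ n := fun i =>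
    (norm_coeff_multiset_prod_X_sub_C_le hS i).trans (pow_le_pow_right₀ hr1 (by omega))
  have hhB : ∀ s, ‖h.coeff s‖ ≤ δ * (1 + n * (1 + r) ^ n) ^ n := fun s => by
    refine (hg.norm_coeff_le_of_norm_coeff_mul_le hgB (hgS ▸ hp) s).trans ?_
    have hgn : (g.natDegree : ℝ) ≤ n := by exact_mod_cast hgS ▸ hSn
    gcongr
    calc (1 + g.natDegree * (1 + r) ^ n) ^ h.natDegree
        ≤ (1 + n * (1 + r) ^ n) ^ h.natDegree := by gcongr
      _ ≤ (1 + n * (1 + r) ^ n) ^ n := pow_le_pow_right₀ (le_add_of_nonneg_right (by positivity)) hhn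
  calc ‖(g * h).coeff j‖ ≤ (j + 1) * ((1 + r) ^ n * (δ * (1 + n * (1 + r) ^ n) ^ n)) :=
        norm_coeff_mul_le hgB hhB j
    _ ≤ (n + 1) * ((1 + r) ^ n * (δ * (1 + n * (1 + r) ^ n) ^ n)) := by gcongr
    _ = _ := by ring

end Polynomial

/-- For q ≠ 0 and ε > 0, every polynomial p of degree at most n with coefficients
δ-close to those of q has at least deg p − deg q roots (with multiplicity) of
modulus greater than 1/ε. -/
theorem roots_escaping_to_infinity_at_least (n : ℕ) (q : Polynomial ℂ) (hq : q ≠ 0)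
    (hqn : q.natDegree ≤ n) (ε : ℝ) (hε : 0 < ε) :
    ∃ δ > 0, ∀ p : Polynomial ℂ, p.natDegree ≤ n →
      (∀ i ≤ n, ‖p.coeff i - q.coeff i‖ < δ) →
      p.natDegree - q.natDegree ≤ (p.roots.filter (fun z => 1 / ε < ‖z‖)).card := by
  set c := ‖q.leadingCoeff‖
  have hc : 0 < c := norm_pos_iff.2 (leadingCoeff_ne_zero.2 hq)
  set C : ℝ := (n + 1) * (1 + 1 / ε) ^ n * (1 + n * (1 + 1 / ε) ^ n) ^ n
  have hC : 0 ≤ C := by positivity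
  refine ⟨c / (C + 1), by positivity, fun p hpn hpq => ?_⟩
  set S := p.roots.filter fun z => ¬1 / ε < ‖z‖
  have hSq : S.card ≤ q.natDegree := by
    by_contra! hqS
    have hsmall : ∀ i, S.card ≤ i → ‖p.coeff i‖ ≤ c / (C + 1) := fun i hi => by
      by_cases hin : i ≤ n
      · simpa [coeff_eq_zero_of_natDegree_lt (hqS.trans_le hi)] using (hpq i hin).le
      · simpa [coeff_eq_zero_of_natDegree_lt (hpn.trans_lt (not_le.1 hin))] using by positivity
    have hupper : ‖p.coeff q.natDegree‖ ≤ C * (c / (C + 1)) :=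
      norm_coeff_le_of_le_roots hpn (Multiset.filter_le _ _) (by positivity)
        (fun z hz => not_lt.1 (Multiset.mem_filter.1 hz).2) hsmall hqn
    have hlower : c - ‖p.coeff q.natDegree‖ < c / (C + 1) :=
      (norm_sub_norm_le _ _).trans_lt (norm_sub_rev (q.coeff _) _ ▸ hpq _ hqn)
    have : C * (c / (C + 1)) + c / (C + 1) = c := by field_simp
    linarith
  have hcard : (p.roots.filter fun z => 1 / ε < ‖z‖).card + S.card = p.natDegree := by
    rw [← Multiset.card_add, Multiset.filter_add_not, IsAlgClosed.card_roots_eq_natDegree]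
  omega
end

section
/- Let q be a nonzero polynomial of degree at most n. If deg q ≥ 1 let ζ_1,…,ζ_d be its distinct roots and assume 0 < ε < (max_{1≤j≤d} |ζ_j|)^{−1} (with this bound interpreted as ∞ if deg q = 0, or if d = 1 and ζ_1 = 0; in those cases assume only ε > 0). Then there exists δ > 0 such that every polynomial p of degree at most n whose coefficients are each within δ of those of q has exactly deg p − deg q roots λ (with multiplicity) satisfying |λ| > 1/ε. -/
/-!
The number of roots of a polynomial in a compact set `K` is upper semicontinuous in the
coefficients: a polynomial with `c` roots `μᵢ ∈ K` factors as `∏ (X - μᵢ) * t`, where synthetic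
division bounds the coefficients of `t`, so the coefficient vectors of such products form a compact
set, which stays at positive distance from any `f ≠ 0` with fewer than `c` roots in `K`.

Applied to `q` and the disk `‖z‖ ≤ 1/ε`, this shows that `p` has at most `deg q` roots in the disk.
Applied to the reflections `Xⁿ q(1/X)` and `Xⁿ p(1/X)` and the disk `‖w‖ ≤ ε`, it shows that `p` has
at most `deg p - deg q` roots outside: `reflect n q` has only its `n - deg q` roots at `0` there
(its other roots are the `1/ζ`, with `ε < ‖1/ζ‖`), while `reflect n p` has `n - deg p` roots at `0`
and the inverses of the roots `λ` of `p` with `1/ε ≤ ‖λ‖` there. Since `p` has `deg p` roots in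
all, the two bounds together give the exact count.
-/

open Polynomial

theorem Multiset.exists_fin_map_le {α : Type*} {s : Multiset α} {k : ℕ} (hk : k ≤ card s) :
    ∃ μ : Fin k → α, Finset.univ.val.map μ ≤ s := by
  have hlen : k ≤ s.toList.length := by rwa [Multiset.length_toList]
  refine ⟨fun i => s.toList[i], ?_⟩
  have htake : List.ofFn (fun i : Fin k => s.toList[i]) = s.toList.take k :=
    List.ext_getElem (by simpa using hlen) (by simp)
  conv_rhs => rw [← s.coe_toList]
  rw [Fin.univ_val_map, htake, Multiset.coe_le]
  exact (List.take_sublist k _).subperm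

namespace Polynomial

section Reflect

theorem reflect_one_X_sub_C {R : Type*} [Ring R] (a : R) : reflect 1 (X - C a) = 1 - C a * X := by
  rw [reflect_sub, reflect_C, reflect_one_X]
  simp

theorem roots_one_sub_C_mul_X {K : Type*} [Field K] {a : K} (ha : a ≠ 0) :
    (1 - C a * X).roots = {a⁻¹} := by
  have h : (1 : K[X]) - C a * X = C (-a) * (X - C a⁻¹) := by
    rw [mul_sub, ← C_mul, neg_mul, mul_inv_cancel₀ ha]
    simp only [map_neg, map_one]
    ring
  rw [h, roots_C_mul _ (neg_ne_zero.2 ha), roots_X_sub_C]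

theorem roots_reflect_prod_X_sub_C {K : Type*} [Field K] [DecidableEq K] (s : Multiset K) :
    (reflect (Multiset.card s) (s.map (X - C ·)).prod).roots = (s.filter (· ≠ 0)).map (·⁻¹) := by
  induction s using Multiset.induction with
  | empty => simp
  | cons a s ih =>
    have hs : ((s.map (X - C ·)).prod).natDegree = Multiset.card s :=
      natDegree_multiset_prod_X_sub_C_eq_card s
    rw [Multiset.map_cons, Multiset.prod_cons, Multiset.card_cons, add_comm,
      reflect_mul _ _ (natDegree_X_sub_C a).le hs.le, reflect_one_X_sub_C, roots_mul, ih]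
    · by_cases ha : a = 0
      · simp [ha]
      · simp [ha, roots_one_sub_C_mul_X ha]
    · refine mul_ne_zero (fun h => by simpa using congrArg (coeff · 0) h) ?_
      exact reflect_eq_zero_iff.not.2
        (monic_multiset_prod_of_monic _ _ fun a _ => monic_X_sub_C a).ne_zero

theorem roots_reflect {K : Type*} [Field K] [IsAlgClosed K] [DecidableEq K] {p : K[X]}
    (hp : p ≠ 0) {N : ℕ} (hN : p.natDegree ≤ N) :
    (reflect N p).roots =
      Multiset.replicate (N - p.natDegree) 0 + (p.roots.filter (· ≠ 0)).map (·⁻¹) := by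
  have hcard := IsAlgClosed.card_roots_eq_natDegree (p := p)
  set g := (p.roots.map (X - C ·)).prod
  have hg : g.natDegree = p.natDegree := by
    rw [natDegree_multiset_prod_X_sub_C_eq_card, hcard]
  have hreflect :
      reflect N p = C p.leadingCoeff * (reflect p.natDegree g * X ^ (N - p.natDegree)) := by
    have h := reflect_mul g 1 hg.le (G := N - p.natDegree) (by simp)
    rw [mul_one, reflect_one, Nat.add_sub_cancel' hN] at h
    conv_lhs => rw [← C_leadingCoeff_mul_prod_multiset_X_sub_C hcard, reflect_C_mul, h]
  rw [hreflect, roots_C_mul _ (leadingCoeff_ne_zero.2 hp), roots_mul, roots_X_pow, ← hcard,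
    roots_reflect_prod_X_sub_C, add_comm, Multiset.nsmul_singleton]
  exact right_ne_zero_of_mul (hreflect ▸ reflect_eq_zero_iff.not.2 hp)

theorem card_roots_reflect_filter_mem_closedBall {K : Type*} [NormedField K] [IsAlgClosed K]
    {p : K[X]} (hp : p ≠ 0) {N : ℕ} (hN : p.natDegree ≤ N) {ε : ℝ} (hε : 0 < ε)
    [DecidablePred (· ∈ Metric.closedBall (0 : K) ε)] :
    ((reflect N p).roots.filter (· ∈ Metric.closedBall 0 ε)).card =
      N - p.natDegree + (p.roots.filter fun z => 1 ≤ ε * ‖z‖).card := by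
  classical
  rw [roots_reflect hp hN, Multiset.filter_add, Multiset.card_add,
    Multiset.filter_eq_self.2 fun z hz => by simpa [Multiset.eq_of_mem_replicate hz] using hε.le,
    Multiset.card_replicate, Multiset.filter_map, Multiset.card_map, Multiset.filter_filter]
  congr 2
  refine Multiset.filter_congr fun z _ => ?_
  rcases eq_or_ne z 0 with rfl | hz
  · simp
  · simp only [Function.comp_apply, mem_closedBall_zero_iff, norm_inv, ne_eq, hz, not_false_eq_true,
      and_true, inv_le_iff_one_le_mul₀ (norm_pos_iff.2 hz)]

theorem forall_norm_coeff_reflect_sub_lt {R : Type*} [SeminormedRing R] {p q : R[X]} {N : ℕ}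
    {δ : ℝ} (h : ∀ i ≤ N, ‖p.coeff i - q.coeff i‖ < δ) :
    ∀ i ≤ N, ‖(reflect N p).coeff i - (reflect N q).coeff i‖ < δ := fun i hi => by
  rw [coeff_reflect, coeff_reflect, revAt_le hi]
  exact h _ (Nat.sub_le N i)

end Reflect

section Continuity

variable {R α : Type*} [CommRing R] [TopologicalSpace R] [TopologicalSpace α]

theorem continuous_coeff_mul [IsTopologicalRing R] {P Q : α → R[X]}
    (hP : ∀ i, Continuous fun x => (P x).coeff i) (hQ : ∀ i, Continuous fun x => (Q x).coeff i)
    (j : ℕ) : Continuous fun x => (P x * Q x).coeff j := by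
  simp only [coeff_mul]
  exact continuous_finsetSum _ fun ij _ => (hP ij.1).mul (hQ ij.2)

theorem continuous_coeff_prod_X_sub_C [IsTopologicalRing R] {ι : Type*} [DecidableEq ι]
    (s : Finset ι) (j : ℕ) : Continuous fun μ : ι → R => (∏ i ∈ s, (X - C (μ i))).coeff j := by
  induction s using Finset.induction generalizing j with
  | empty => simpa using continuous_const
  | insert i s hi ih =>
    simp only [Finset.prod_insert hi]
    refine continuous_coeff_mul (fun k => ?_) ih j
    simp only [coeff_sub, coeff_X, coeff_C]
    split_ifs <;> fun_prop

theorem continuous_coeff_ofFn [DecidableEq R] (n j : ℕ) :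
    Continuous fun v : Fin n → R => (ofFn n v).coeff j := by
  by_cases hj : j < n
  · simpa [ofFn_coeff_eq_val_of_lt _ hj] using continuous_apply _
  · simpa [ofFn_coeff_eq_zero_of_ge _ (not_lt.1 hj)] using continuous_const

end Continuity

theorem eq_of_toFn_eq {R : Type*} [Semiring R] {n : ℕ} {p q : R[X]} (hp : p.natDegree < n)
    (hq : q.natDegree < n) (h : toFn n p = toFn n q) : p = q := by
  classical
  rw [← ofFn_comp_toFn_eq_id_of_natDegree_lt hp, h, ofFn_comp_toFn_eq_id_of_natDegree_lt hq]

section Divisors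

theorem prod_X_sub_C_eq_multiset_prod {R : Type*} [CommRing R] {k : ℕ} (μ : Fin k → R) :
    ∏ i, (X - C (μ i)) = ((Finset.univ.val.map μ).map (X - C ·)).prod := by
  rw [Finset.prod_eq_multiset_prod, Multiset.map_map]
  rfl

variable {R : Type*} [CommRing R] [IsDomain R] {K : Set R} [DecidablePred (· ∈ K)]

theorem exists_prod_X_sub_C_dvd {p : R[X]} {k : ℕ} (hk : k ≤ (p.roots.filter (· ∈ K)).card) :
    ∃ μ : Fin k → R, (∀ i, μ i ∈ K) ∧ ∏ i, (X - C (μ i)) ∣ p := by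
  obtain ⟨μ, hμ⟩ := Multiset.exists_fin_map_le hk
  refine ⟨μ, fun i => (Multiset.mem_filter.1 (Multiset.mem_of_le hμ (by simp))).2, ?_⟩
  rw [prod_X_sub_C_eq_multiset_prod]
  have hroots : Finset.univ.val.map μ ≤ p.roots := hμ.trans (Multiset.filter_le _ _)
  exact (Multiset.prod_dvd_prod_of_le (Multiset.map_le_map hroots)).trans
    (prod_multiset_X_sub_C_dvd p)

theorem le_card_roots_filter_of_prod_X_sub_C_dvd {f : R[X]} (hf : f ≠ 0) {k : ℕ} {μ : Fin k → R}
    (hμ : ∀ i, μ i ∈ K) (hdvd : ∏ i, (X - C (μ i)) ∣ f) : k ≤ (f.roots.filter (· ∈ K)).card := by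
  rw [prod_X_sub_C_eq_multiset_prod] at hdvd
  have hle : Finset.univ.val.map μ ≤ f.roots := by
    simpa only [roots_multiset_prod_X_sub_C] using roots.le_of_dvd hf hdvd
  calc k = (Finset.univ.val.map μ).card := by simp
    _ = ((Finset.univ.val.map μ).filter (· ∈ K)).card := by
        rw [Multiset.filter_eq_self.2 (by simpa using hμ)]
    _ ≤ _ := Multiset.card_le_card (Multiset.filter_le_filter _ hle)

end Divisors

section CoeffBounds

variable {𝕜 : Type*} [NormedField 𝕜]

theorem norm_coeff_le_of_X_sub_C_mul_eq {a : 𝕜} {t p : 𝕜[X]} (h : (X - C a) * t = p) {N : ℕ}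
    (hpN : p.natDegree ≤ N) {M : ℝ} (hM : ∀ i, ‖p.coeff i‖ ≤ M) (j : ℕ) :
    ‖t.coeff j‖ ≤ M * (1 + ‖a‖) ^ N := by
  have hM0 : 0 ≤ M := (norm_nonneg _).trans (hM 0)
  have htop : ∀ j, N ≤ j → t.coeff j = 0 := by
    rcases eq_or_ne t 0 with rfl | ht
    · simp
    · intro j hj
      have : p.natDegree = 1 + t.natDegree := by
        rw [← h, natDegree_mul (X_sub_C_ne_zero a) ht, natDegree_X_sub_C]
      exact coeff_eq_zero_of_natDegree_lt (by omega)
  have hrec : ∀ j, t.coeff j = p.coeff (j + 1) + a * t.coeff (j + 1) := fun j => by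
    rw [← h, sub_mul, coeff_sub, coeff_X_mul, coeff_C_mul]
    ring
  have key : ∀ d j, N ≤ j + d → ‖t.coeff j‖ ≤ M * (1 + ‖a‖) ^ d := by
    intro d
    induction d with
    | zero => intro j hj; simpa [htop j hj] using hM0
    | succ d ih =>
      intro j hj
      have hpow : M ≤ M * (1 + ‖a‖) ^ d :=
        le_mul_of_one_le_right hM0 (one_le_pow₀ (by simp))
      calc ‖t.coeff j‖ ≤ ‖p.coeff (j + 1)‖ + ‖a‖ * ‖t.coeff (j + 1)‖ := by
            rw [hrec j, ← norm_mul]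
            exact norm_add_le _ _
        _ ≤ M * (1 + ‖a‖) ^ d + ‖a‖ * (M * (1 + ‖a‖) ^ d) := by
            gcongr
            · exact (hM _).trans hpow
            · exact ih _ (by omega)
        _ = M * (1 + ‖a‖) ^ (d + 1) := by ring
  exact key N j (by omega)

theorem norm_coeff_le_of_prod_X_sub_C_mul_eq {ι : Type*} [DecidableEq ι] {s : Finset ι}
    {μ : ι → 𝕜} {r : ℝ} (hr : ∀ i ∈ s, ‖μ i‖ ≤ r) {t p : 𝕜[X]}
    (h : (∏ i ∈ s, (X - C (μ i))) * t = p) {N : ℕ} (hpN : p.natDegree ≤ N) {M : ℝ}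
    (hM : ∀ i, ‖p.coeff i‖ ≤ M) (j : ℕ) : ‖t.coeff j‖ ≤ M * (1 + r) ^ (N * s.card) := by
  induction s using Finset.induction generalizing p M with
  | empty => simpa [← h] using hM j
  | insert i s hi ih =>
    rw [Finset.prod_insert hi, mul_assoc] at h
    set u := (∏ i ∈ s, (X - C (μ i))) * t
    have huN : u.natDegree ≤ N := by
      rcases eq_or_ne u 0 with hu | hu
      · simp [hu]
      · rw [← h, natDegree_mul (X_sub_C_ne_zero _) hu] at hpN
        omega
    have hu : ∀ k, ‖u.coeff k‖ ≤ M * (1 + r) ^ N := fun k =>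
      (norm_coeff_le_of_X_sub_C_mul_eq h hpN hM k).trans <| by
        gcongr
        exacts [(norm_nonneg _).trans (hM 0), hr i (Finset.mem_insert_self i s)]
    calc ‖t.coeff j‖ ≤ M * (1 + r) ^ N * (1 + r) ^ (N * s.card) :=
          ih (fun k hk => hr k (Finset.mem_insert_of_mem hk)) rfl huN hu
      _ = M * (1 + r) ^ (N * (insert i s).card) := by
          rw [Finset.card_insert_of_notMem hi, mul_assoc, ← pow_add]
          ring_nf

theorem norm_coeff_le_of_forall_norm_coeff_sub_lt_one {p f : 𝕜[X]} {N : ℕ}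
    (hpN : p.natDegree ≤ N) (h : ∀ i ≤ N, ‖p.coeff i - f.coeff i‖ < 1) (i : ℕ) :
    ‖p.coeff i‖ ≤ 1 + ∑ j ∈ Finset.range (N + 1), ‖f.coeff j‖ := by
  by_cases hi : i ≤ N
  · have hfi : ‖f.coeff i‖ ≤ ∑ j ∈ Finset.range (N + 1), ‖f.coeff j‖ :=
      Finset.single_le_sum (fun j _ => norm_nonneg _) (Finset.mem_range.2 (by omega))
    linarith [norm_le_norm_add_norm_sub' (p.coeff i) (f.coeff i), h i hi]
  · rw [coeff_eq_zero_of_natDegree_lt (by omega), norm_zero]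
    positivity

end CoeffBounds

section Semicontinuity

variable {𝕜 : Type*} [NormedField 𝕜] [ProperSpace 𝕜] {K : Set 𝕜}

theorem isCompact_setOf_toFn_prod_X_sub_C_mul (hK : IsCompact K) (k N : ℕ) (B : ℝ) :
    IsCompact {v : Fin (k + N + 1) → 𝕜 | ∃ μ : Fin k → 𝕜, (∀ i, μ i ∈ K) ∧ ∃ t : 𝕜[X],
      t.natDegree ≤ N ∧ (∀ j, ‖t.coeff j‖ ≤ B) ∧ toFn _ ((∏ i, (X - C (μ i))) * t) = v} := by
  classical
  let Φ : (Fin k → 𝕜) × (Fin (N + 1) → 𝕜) → Fin (k + N + 1) → 𝕜 :=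
    fun x j => ((∏ i, (X - C (x.1 i))) * ofFn (N + 1) x.2).coeff j
  have hΦ : Continuous Φ := continuous_pi fun j =>
    continuous_coeff_mul (P := fun x : (Fin k → 𝕜) × (Fin (N + 1) → 𝕜) => ∏ i, (X - C (x.1 i)))
      (fun i => (continuous_coeff_prod_X_sub_C Finset.univ i).comp continuous_fst)
      (fun i => (continuous_coeff_ofFn _ i).comp continuous_snd) j
  convert ((isCompact_univ_pi fun _ => hK).prod
    (isCompact_closedBall (0 : Fin (N + 1) → 𝕜) B)).image hΦ using 1
  ext v
  constructor
  · rintro ⟨μ, hμ, t, htN, htB, rfl⟩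
    refine ⟨(μ, toFn (N + 1) t), ⟨fun i _ => hμ i, ?_⟩, ?_⟩
    · rw [mem_closedBall_zero_iff, pi_norm_le_iff_of_nonneg ((norm_nonneg _).trans (htB 0))]
      exact fun j => htB j
    · funext j
      change ((∏ i, (X - C (μ i))) * ofFn (N + 1) (toFn (N + 1) t)).coeff j = _
      rw [ofFn_comp_toFn_eq_id_of_natDegree_lt (by omega)]
      rfl
  · rintro ⟨⟨μ, w⟩, ⟨hμ, hw⟩, rfl⟩
    refine ⟨μ, fun i => hμ i trivial, ofFn (N + 1) w,
      Nat.lt_succ_iff.1 (ofFn_natDegree_lt (Nat.succ_pos N) w), fun j => ?_, rfl⟩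
    have hB : ∀ i, ‖w i‖ ≤ B := (pi_norm_le_iff_of_nonneg ((norm_nonneg _).trans
      (mem_closedBall_zero_iff.1 hw))).1 (mem_closedBall_zero_iff.1 hw)
    by_cases hj : j < N + 1
    · rw [ofFn_coeff_eq_val_of_lt _ hj]
      exact hB _
    · rw [ofFn_coeff_eq_zero_of_ge _ (not_lt.1 hj), norm_zero]
      exact (norm_nonneg _).trans (hB 0)

theorem exists_forall_card_roots_filter_le [DecidablePred (· ∈ K)] (hK : IsCompact K)
    {f : 𝕜[X]} (hf : f ≠ 0) {N : ℕ} (hfN : f.natDegree ≤ N) :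
    ∃ δ > 0, ∀ p : 𝕜[X], p.natDegree ≤ N → (∀ i ≤ N, ‖p.coeff i - f.coeff i‖ < δ) →
      (p.roots.filter (· ∈ K)).card ≤ (f.roots.filter (· ∈ K)).card := by
  set k := (f.roots.filter (· ∈ K)).card + 1
  obtain ⟨r, -, hr⟩ := hK.isBounded.exists_pos_norm_le
  set B := (1 + ∑ j ∈ Finset.range (N + 1), ‖f.coeff j‖) * (1 + r) ^ (N * k)
  set S := {v : Fin (k + N + 1) → 𝕜 | ∃ μ : Fin k → 𝕜, (∀ i, μ i ∈ K) ∧ ∃ t : 𝕜[X],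
      t.natDegree ≤ N ∧ (∀ j, ‖t.coeff j‖ ≤ B) ∧ toFn _ ((∏ i, (X - C (μ i))) * t) = v}
  have hf_notMem : toFn _ f ∉ S := by
    rintro ⟨μ, hμ, t, htN, -, hft⟩
    have hdeg : ((∏ i, (X - C (μ i))) * t).natDegree < k + N + 1 :=
      natDegree_mul_le.trans_lt (by simpa using Nat.add_lt_add_left (Nat.lt_succ_of_le htN) k)
    have := le_card_roots_filter_of_prod_X_sub_C_dvd hf hμ
      ⟨t, eq_of_toFn_eq (by omega) hdeg hft.symm⟩
    omega
  obtain ⟨δ, hδ, hball⟩ := Metric.isOpen_iff.1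
    (isCompact_setOf_toFn_prod_X_sub_C_mul hK k N B).isClosed.isOpen_compl _ hf_notMem
  refine ⟨min δ 1, by positivity, fun p hpN hpf => ?_⟩
  by_contra! hcount
  obtain ⟨μ, hμK, t, hpt⟩ := exists_prod_X_sub_C_dvd hcount
  have hp : p ≠ 0 := by
    rintro rfl
    simp at hcount
  have htB : ∀ j, ‖t.coeff j‖ ≤ B := by
    simpa using norm_coeff_le_of_prod_X_sub_C_mul_eq (s := Finset.univ)
      (fun i _ => hr _ (hμK i)) hpt.symm hpN
      (norm_coeff_le_of_forall_norm_coeff_sub_lt_one hpN fun i hi =>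
        (hpf i hi).trans_le (min_le_right _ _))
  have hmem : toFn _ p ∈ S :=
    ⟨μ, hμK, t, (natDegree_le_of_dvd (Dvd.intro_left _ hpt.symm) hp).trans hpN, htB, by rw [hpt]⟩
  refine hball ?_ hmem
  rw [Metric.mem_ball, dist_pi_lt_iff hδ]
  intro j
  by_cases hj : (j : ℕ) ≤ N
  · rw [dist_eq_norm]
    exact (hpf j hj).trans_le (min_le_left _ _)
  · simpa [toFn, coeff_eq_zero_of_natDegree_lt (hpN.trans_lt (not_le.1 hj)),
      coeff_eq_zero_of_natDegree_lt (hfN.trans_lt (not_le.1 hj))] using hδ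

end Semicontinuity

end Polynomial

/-- For q ≠ 0 and ε > 0 with ε < (max_j |ζ_j|)⁻¹ over the distinct roots ζ_j of q
(a condition expressed as ε·|ζ| < 1 for every root ζ of q, which is automatic in the
cases where the bound is interpreted as ∞), every polynomial p of degree at most n with
coefficients δ-close to those of q has exactly deg p − deg q roots (with multiplicity)
of modulus greater than 1/ε. -/
theorem roots_escaping_to_infinity_exact (n : ℕ) (q : Polynomial ℂ) (hq : q ≠ 0)
    (hqn : q.natDegree ≤ n) (ε : ℝ) (hε : 0 < ε)
    (hεroots : ∀ z : ℂ, q.IsRoot z → ε * ‖z‖ < 1) :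
    ∃ δ > 0, ∀ p : Polynomial ℂ, p.natDegree ≤ n →
      (∀ i ≤ n, ‖p.coeff i - q.coeff i‖ < δ) →
      (p.roots.filter (fun z => 1 / ε < ‖z‖)).card = p.natDegree - q.natDegree := by
  classical
  obtain ⟨δ₁, hδ₁, h_disk⟩ :=
    exists_forall_card_roots_filter_le (isCompact_closedBall (0 : ℂ) (1 / ε)) hq hqn
  obtain ⟨δ₂, hδ₂, h_reflect⟩ :=
    exists_forall_card_roots_filter_le (isCompact_closedBall (0 : ℂ) ε)
      (reflect_eq_zero_iff.not.2 hq) (natDegree_reflect_le.trans (max_le le_rfl hqn))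
  refine ⟨min δ₁ δ₂, lt_min hδ₁ hδ₂, fun p hpn hpq => ?_⟩
  rcases eq_or_ne p 0 with rfl | hp
  · simp
  have h_inner : (p.roots.filter (· ∈ Metric.closedBall 0 (1 / ε))).card ≤ q.natDegree :=
    (h_disk p hpn fun i hi => (hpq i hi).trans_le (min_le_left _ _)).trans
      ((Multiset.card_le_card (Multiset.filter_le _ _)).trans (card_roots' q))
  have h_outer := h_reflect (reflect n p) (natDegree_reflect_le.trans (max_le le_rfl hpn))
    (forall_norm_coeff_reflect_sub_lt fun i hi => (hpq i hi).trans_le (min_le_right _ _))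
  rw [card_roots_reflect_filter_mem_closedBall hp hpn hε,
    card_roots_reflect_filter_mem_closedBall hq hqn hε,
    Multiset.filter_eq_nil.2 fun z hz => (hεroots z (isRoot_of_mem_roots hz)).not_ge] at h_outer
  have h_far : (p.roots.filter fun z => 1 / ε < ‖z‖).card ≤
      (p.roots.filter fun z => 1 ≤ ε * ‖z‖).card :=
    Multiset.card_le_card (Multiset.monotone_filter_right _ fun z hz => ((div_lt_iff₀' hε).1 hz).le)
  have h_total : (p.roots.filter fun z => 1 / ε < ‖z‖).card +
      (p.roots.filter (· ∈ Metric.closedBall 0 (1 / ε))).card = p.natDegree := by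
    rw [← IsAlgClosed.card_roots_eq_natDegree, ← Multiset.card_add]
    conv_rhs => rw [← Multiset.filter_add_not (fun z => 1 / ε < ‖z‖) p.roots]
    simp only [mem_closedBall_zero_iff, not_lt]
  simp only [Multiset.card_zero, add_zero] at h_outer
  omega
end

section
/- Let f(z) = Σ_{i=0}^n a_i z^{n−i} and g(z) = Σ_{i=0}^n b_i z^{n−i} be complex polynomials with b_0 ≠ 0, and suppose |a_0 − b_0| ≤ |b_0|/2 and max_{0≤i≤n} |a_i − b_i| ≤ Σ_{i=0}^n |b_i/b_0|. Let β_1,…,β_n be all roots of g counted with multiplicity. If f(α) = 0 for some α ∈ ℂ, then min_{1≤i≤n} |α − β_i| ≤ C^{1/n} (max_{0≤i≤n} |a_i − b_i|)^{1/n}, where D = [1 + Σ_{i=0}^n (2/|b_0|^2)(|b_0| + |b_i|)] Σ_{i=0}^n |b_i/b_0| and C = Σ_{i=1}^n (2/|b_0|^2)(|b_0| + |b_i|) D^{n−i}. -/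
/-!
Since `a₀` is within `|b₀|/2` of `b₀`, each `|aᵢ/a₀|` exceeds `|bᵢ/b₀|` by at most
`2 M (|b₀| + |bᵢ|) / |b₀|²`, so Cauchy's bound puts every root `α` of `f` in the disc `|α| ≤ D`.
As `f(α) = 0`, `g(α) = g(α) - (b₀/a₀) f(α) = ∑_{i ≥ 1} (bᵢ - b₀ aᵢ / a₀) α^(n-i)` has size at most
`|b₀| C M`, while `|g(α)| = |b₀| ∏ₖ |α - βₖ| ≥ |b₀| minₖ |α - βₖ|ⁿ`.
-/

open Finset Polynomial

theorem sum_range_succ_eq_add_sum_Icc {M : Type*} [AddCommMonoid M] (f : ℕ → M) (n : ℕ) :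
    ∑ i ∈ range (n + 1), f i = f 0 + ∑ i ∈ Icc 1 n, f i := by
  rw [range_eq_Ico, sum_eq_sum_Ico_succ_bot n.succ_pos]
  rfl

theorem Icc_one_subset_range_add_one (n : ℕ) : Icc 1 n ⊆ range (n + 1) := fun i hi => by
  simp only [mem_Icc, mem_range] at hi ⊢
  omega

section Reversed
variable {R : Type*} [Semiring R] (a : ℕ → R) (n : ℕ)

theorem coeff_sum_C_mul_X_pow_sub {j : ℕ} (hj : j ≤ n) :
    (∑ i ∈ range (n + 1), C (a i) * X ^ (n - i)).coeff j = a (n - j) := by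
  rw [finsetSum_coeff, sum_eq_single (n - j)]
  · simp [Nat.sub_sub_self hj]
  · intro i hi hne
    rw [mem_range] at hi
    rw [coeff_C_mul_X_pow, if_neg (by omega)]
  · simp

theorem natDegree_sum_C_mul_X_pow_sub (ha : a 0 ≠ 0) :
    (∑ i ∈ range (n + 1), C (a i) * X ^ (n - i)).natDegree = n := by
  refine natDegree_eq_of_le_of_coeff_ne_zero ?_ ?_
  · exact natDegree_sum_le_of_forall_le _ _ fun i _ =>
      (natDegree_C_mul_X_pow_le _ _).trans (Nat.sub_le _ _)
  · rwa [coeff_sum_C_mul_X_pow_sub a n le_rfl, Nat.sub_self]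

theorem leadingCoeff_sum_C_mul_X_pow_sub (ha : a 0 ≠ 0) :
    (∑ i ∈ range (n + 1), C (a i) * X ^ (n - i)).leadingCoeff = a 0 := by
  rw [leadingCoeff, natDegree_sum_C_mul_X_pow_sub a n ha, coeff_sum_C_mul_X_pow_sub a n le_rfl,
    Nat.sub_self]

end Reversed

section Cauchy
variable {K : Type*} [NormedField K] (a : ℕ → K) (n : ℕ)

theorem cauchyBound_sum_C_mul_X_pow_sub_le (ha : a 0 ≠ 0) :
    (cauchyBound (∑ i ∈ range (n + 1), C (a i) * X ^ (n - i)) : ℝ) ≤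
      1 + ∑ i ∈ Icc 1 n, ‖a i / a 0‖ := by
  set p := ∑ i ∈ range (n + 1), C (a i) * X ^ (n - i)
  have hsup : (range n).sup (‖p.coeff ·‖₊) ≤ ∑ i ∈ Icc 1 n, ‖a i‖₊ := by
    refine (Finset.sup_le fun j hj => single_le_sum (fun _ _ => zero_le) hj).trans_eq ?_
    refine sum_nbij' (fun j => n - j) (fun i => n - i) ?_ ?_ ?_ ?_ ?_ <;> intro j hj <;>
      simp only [mem_range, mem_Icc] at hj ⊢
    any_goals omega
    rw [coeff_sum_C_mul_X_pow_sub a n hj.le]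
  rw [cauchyBound, natDegree_sum_C_mul_X_pow_sub a n ha, leadingCoeff_sum_C_mul_X_pow_sub a n ha,
    add_comm]
  simp_rw [norm_div, ← sum_div]
  push_cast
  gcongr
  simpa using NNReal.coe_le_coe.mpr hsup

theorem norm_lt_one_add_sum_of_eval_sum_eq_zero (ha : a 0 ≠ 0) {z : K}
    (hz : (∑ i ∈ range (n + 1), C (a i) * X ^ (n - i)).eval z = 0) :
    ‖z‖ < 1 + ∑ i ∈ Icc 1 n, ‖a i / a 0‖ := by
  have hp : ∑ i ∈ range (n + 1), C (a i) * X ^ (n - i) ≠ 0 := fun h0 => ha <| by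
    rw [← leadingCoeff_sum_C_mul_X_pow_sub a n ha, h0, leadingCoeff_zero]
  exact (NNReal.coe_lt_coe.mpr (IsRoot.norm_lt_cauchyBound hp hz)).trans_le
    (cauchyBound_sum_C_mul_X_pow_sub_le a n ha)

end Cauchy

section Perturbation
variable {K : Type*} [NormedField K]

theorem norm_div_two_le_of_norm_sub_le {a b : K} (h : ‖a - b‖ ≤ ‖b‖ / 2) : ‖b‖ / 2 ≤ ‖a‖ := by
  have := norm_sub_norm_le b a
  rw [norm_sub_rev] at this
  linarith

theorem ne_zero_of_norm_sub_le_half {a b : K} (hb : b ≠ 0) (h : ‖a - b‖ ≤ ‖b‖ / 2) : a ≠ 0 :=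
  norm_pos_iff.mp <| (div_pos (norm_pos_iff.mpr hb) two_pos).trans_le
    (norm_div_two_le_of_norm_sub_le h)

variable {a₀ b₀ a b : K} {M : ℝ}

theorem norm_sub_div_mul_le (hb₀ : b₀ ≠ 0) (h₀ : ‖a₀ - b₀‖ ≤ ‖b₀‖ / 2) (hM₀ : ‖a₀ - b₀‖ ≤ M)
    (hM : ‖a - b‖ ≤ M) : ‖b - b₀ / a₀ * a‖ ≤ ‖b₀‖ * (2 / ‖b₀‖ ^ 2 * (‖b₀‖ + ‖b‖)) * M := by
  have hb₀' : 0 < ‖b₀‖ := norm_pos_iff.mpr hb₀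
  have ha₀ := norm_div_two_le_of_norm_sub_le h₀
  have ha₀' : a₀ ≠ 0 := ne_zero_of_norm_sub_le_half hb₀ h₀
  have e : b - b₀ / a₀ * a = (b * (a₀ - b₀) - b₀ * (a - b)) / a₀ := by field_simp; ring
  calc ‖b - b₀ / a₀ * a‖ = ‖b * (a₀ - b₀) - b₀ * (a - b)‖ / ‖a₀‖ := by rw [e, norm_div]
    _ ≤ (‖b‖ * M + ‖b₀‖ * M) / (‖b₀‖ / 2) := by
      have hM0 : 0 ≤ M := (norm_nonneg _).trans hM
      refine div_le_div₀ (by positivity) ?_ (by positivity) ha₀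
      refine (norm_sub_le _ _).trans ?_
      rw [norm_mul, norm_mul]
      gcongr
    _ = ‖b₀‖ * (2 / ‖b₀‖ ^ 2 * (‖b₀‖ + ‖b‖)) * M := by field_simp; ring

theorem norm_div_le_norm_div_add (hb₀ : b₀ ≠ 0) (h₀ : ‖a₀ - b₀‖ ≤ ‖b₀‖ / 2)
    (hM₀ : ‖a₀ - b₀‖ ≤ M) (hM : ‖a - b‖ ≤ M) :
    ‖a / a₀‖ ≤ ‖b / b₀‖ + 2 / ‖b₀‖ ^ 2 * (‖b₀‖ + ‖b‖) * M := by
  have ha₀ : a₀ ≠ 0 := ne_zero_of_norm_sub_le_half hb₀ h₀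
  have e : a / a₀ = b / b₀ - (b - b₀ / a₀ * a) / b₀ := by field_simp; ring
  calc ‖a / a₀‖ ≤ ‖b / b₀‖ + ‖b - b₀ / a₀ * a‖ / ‖b₀‖ := by
        rw [e, ← norm_div]; exact norm_sub_le _ _
    _ ≤ ‖b / b₀‖ + ‖b₀‖ * (2 / ‖b₀‖ ^ 2 * (‖b₀‖ + ‖b‖)) * M / ‖b₀‖ := by
        gcongr; exact norm_sub_div_mul_le hb₀ h₀ hM₀ hM
    _ = ‖b / b₀‖ + 2 / ‖b₀‖ ^ 2 * (‖b₀‖ + ‖b‖) * M := by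
        field_simp [norm_ne_zero_iff.mpr hb₀]

variable (a b : ℕ → K) (n : ℕ)

theorem one_add_sum_norm_div_le (hb0 : b 0 ≠ 0) (h1 : ‖a 0 - b 0‖ ≤ ‖b 0‖ / 2)
    (hM : ∀ i ∈ range (n + 1), ‖a i - b i‖ ≤ M) (h2 : M ≤ ∑ i ∈ range (n + 1), ‖b i / b 0‖) :
    1 + ∑ i ∈ Icc 1 n, ‖a i / a 0‖ ≤
      (1 + ∑ i ∈ range (n + 1), 2 / ‖b 0‖ ^ 2 * (‖b 0‖ + ‖b i‖)) *
        ∑ i ∈ range (n + 1), ‖b i / b 0‖ := by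
  have hS : ∑ i ∈ range (n + 1), ‖b i / b 0‖ = 1 + ∑ i ∈ Icc 1 n, ‖b i / b 0‖ := by
    rw [sum_range_succ_eq_add_sum_Icc, div_self hb0, norm_one]
  have hT : ∑ i ∈ Icc 1 n, 2 / ‖b 0‖ ^ 2 * (‖b 0‖ + ‖b i‖) ≤
      ∑ i ∈ range (n + 1), 2 / ‖b 0‖ ^ 2 * (‖b 0‖ + ‖b i‖) := by
    rw [sum_range_succ_eq_add_sum_Icc]
    exact le_add_of_nonneg_left (by positivity)
  set S := ∑ i ∈ range (n + 1), ‖b i / b 0‖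
  set T := ∑ i ∈ range (n + 1), 2 / ‖b 0‖ ^ 2 * (‖b 0‖ + ‖b i‖)
  have hM0 : 0 ≤ M := (norm_nonneg _).trans (hM 0 (by simp))
  calc 1 + ∑ i ∈ Icc 1 n, ‖a i / a 0‖
      ≤ 1 + ∑ i ∈ Icc 1 n, (‖b i / b 0‖ + 2 / ‖b 0‖ ^ 2 * (‖b 0‖ + ‖b i‖) * M) := by
        gcongr with i hi
        exact norm_div_le_norm_div_add hb0 h1 (hM 0 (by simp))
          (hM i (Icc_one_subset_range_add_one n hi))
    _ = S + (∑ i ∈ Icc 1 n, 2 / ‖b 0‖ ^ 2 * (‖b 0‖ + ‖b i‖)) * M := by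
        rw [sum_add_distrib, ← sum_mul, hS]; ring
    _ ≤ S + T * S := by gcongr
    _ = (1 + T) * S := by ring

theorem norm_eval_sum_le (hb0 : b 0 ≠ 0) (h1 : ‖a 0 - b 0‖ ≤ ‖b 0‖ / 2)
    (hM : ∀ i ∈ range (n + 1), ‖a i - b i‖ ≤ M) {z : K} {R : ℝ}
    (hz : (∑ i ∈ range (n + 1), C (a i) * X ^ (n - i)).eval z = 0) (hzR : ‖z‖ ≤ R) :
    ‖(∑ i ∈ range (n + 1), C (b i) * X ^ (n - i)).eval z‖ ≤
      ‖b 0‖ * ((∑ i ∈ Icc 1 n, 2 / ‖b 0‖ ^ 2 * (‖b 0‖ + ‖b i‖) * R ^ (n - i)) * M) := by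
  have ha0 : a 0 ≠ 0 := ne_zero_of_norm_sub_le_half hb0 h1
  have hM0 : 0 ≤ M := (norm_nonneg _).trans (hM 0 (by simp))
  have hgz : (∑ i ∈ range (n + 1), C (b i) * X ^ (n - i)).eval z =
      ∑ i ∈ Icc 1 n, (b i - b 0 / a 0 * a i) * z ^ (n - i) := by
    simp only [eval_finsetSum, eval_mul, eval_C, eval_pow, eval_X] at hz ⊢
    calc ∑ i ∈ range (n + 1), b i * z ^ (n - i)
        = ∑ i ∈ range (n + 1), b i * z ^ (n - i) -
            b 0 / a 0 * ∑ i ∈ range (n + 1), a i * z ^ (n - i) := by rw [hz, mul_zero, sub_zero]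
      _ = ∑ i ∈ range (n + 1), (b i - b 0 / a 0 * a i) * z ^ (n - i) := by
        rw [mul_sum, ← sum_sub_distrib]
        exact sum_congr rfl fun i _ => by ring
      _ = _ := by
        rw [sum_range_succ_eq_add_sum_Icc, div_mul_cancel₀ _ ha0, sub_self, zero_mul, zero_add]
  rw [hgz]
  calc ‖∑ i ∈ Icc 1 n, (b i - b 0 / a 0 * a i) * z ^ (n - i)‖
      ≤ ∑ i ∈ Icc 1 n, ‖b i - b 0 / a 0 * a i‖ * ‖z‖ ^ (n - i) := by
        refine (norm_sum_le _ _).trans_eq ?_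
        simp only [norm_mul, norm_pow]
    _ ≤ ∑ i ∈ Icc 1 n, ‖b 0‖ * (2 / ‖b 0‖ ^ 2 * (‖b 0‖ + ‖b i‖)) * M * R ^ (n - i) := by
        gcongr with i hi
        exact norm_sub_div_mul_le hb0 h1 (hM 0 (by simp))
          (hM i (Icc_one_subset_range_add_one n hi))
    _ = _ := by
        rw [sum_mul, mul_sum]
        exact sum_congr rfl fun i _ => by ring

end Perturbation

theorem exists_le_rpow_inv_of_prod_le {ι : Type*} [Fintype ι] [Nonempty ι] (x : ι → ℝ)
    (hx : ∀ i, 0 ≤ x i) {P : ℝ} (h : ∏ i, x i ≤ P) :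
    ∃ i, x i ≤ P ^ ((Fintype.card ι : ℝ)⁻¹) := by
  obtain ⟨k, -, hk⟩ := exists_min_image univ x univ_nonempty
  refine ⟨k, ?_⟩
  have hpow : x k ^ Fintype.card ι ≤ P := by
    calc x k ^ Fintype.card ι = ∏ _i : ι, x k := by rw [prod_const, card_univ]
      _ ≤ ∏ i, x i := prod_le_prod (fun _ _ => hx k) fun i _ => hk i (mem_univ i)
      _ ≤ P := h
  calc x k = (x k ^ Fintype.card ι) ^ ((Fintype.card ι : ℝ)⁻¹) :=
        (Real.pow_rpow_inv_natCast (hx k) Fintype.card_ne_zero).symm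
    _ ≤ P ^ ((Fintype.card ι : ℝ)⁻¹) := by gcongr; exact pow_nonneg (hx k) _

/-- Quantitative perturbation bound: under the stated hypotheses on the coefficients
a_i of f and b_i of g (indexed with a_0, b_0 the leading coefficients), every root α of
f is within C^{1/n} (max_i |a_i − b_i|)^{1/n} of some root β_k of g. -/
theorem quantitative_root_perturbation (n : ℕ) (hn : 1 ≤ n) (a b : ℕ → ℂ)
    (f g : Polynomial ℂ)
    (hf : f = ∑ i ∈ Finset.range (n + 1), Polynomial.C (a i) * X ^ (n - i))
    (hg : g = ∑ i ∈ Finset.range (n + 1), Polynomial.C (b i) * X ^ (n - i))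
    (hb0 : b 0 ≠ 0)
    (M : ℝ)
    (hM : M = (Finset.range (n + 1)).sup'
      (Finset.nonempty_range_iff.mpr (Nat.succ_ne_zero n)) (fun i => ‖a i - b i‖))
    (h1 : ‖a 0 - b 0‖ ≤ ‖b 0‖ / 2)
    (h2 : M ≤ ∑ i ∈ Finset.range (n + 1), ‖b i / b 0‖)
    (β : Fin n → ℂ)
    (hroots : g = Polynomial.C (b 0) * ∏ k : Fin n, (X - Polynomial.C (β k)))
    (D Cc : ℝ)
    (hD : D = (1 + ∑ i ∈ Finset.range (n + 1), 2 / ‖b 0‖ ^ 2 * (‖b 0‖ + ‖b i‖)) *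
      ∑ i ∈ Finset.range (n + 1), ‖b i / b 0‖)
    (hC : Cc = ∑ i ∈ Finset.Icc 1 n, 2 / ‖b 0‖ ^ 2 * (‖b 0‖ + ‖b i‖) * D ^ (n - i))
    (α : ℂ) (hα : f.eval α = 0) :
    ∃ k : Fin n, ‖α - β k‖ ≤ Cc ^ ((n : ℝ)⁻¹) * M ^ ((n : ℝ)⁻¹) := by
  subst hf hg
  have hMle : ∀ i ∈ range (n + 1), ‖a i - b i‖ ≤ M := fun i hi =>
    hM ▸ le_sup' (fun i => ‖a i - b i‖) hi
  have ha0 : a 0 ≠ 0 := ne_zero_of_norm_sub_le_half hb0 h1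
  have hαD : ‖α‖ ≤ D := hD ▸ (norm_lt_one_add_sum_of_eval_sum_eq_zero a n ha0 hα).le.trans
    (one_add_sum_norm_div_le a b n hb0 h1 hMle h2)
  have hprod : ‖b 0‖ * ∏ k, ‖α - β k‖ ≤ ‖b 0‖ * (Cc * M) := by
    have hgα := hC ▸ norm_eval_sum_le a b n hb0 h1 hMle hα hαD
    simpa only [hroots, eval_mul, eval_C, eval_prod, eval_sub, eval_X, norm_mul, norm_prod]
      using hgα
  have : Nonempty (Fin n) := ⟨⟨0, hn⟩⟩
  obtain ⟨k, hk⟩ := exists_le_rpow_inv_of_prod_le (fun k => ‖α - β k‖) (fun _ => norm_nonneg _)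
    (le_of_mul_le_mul_left hprod (norm_pos_iff.mpr hb0))
  have hC0 : 0 ≤ Cc := hC ▸ sum_nonneg fun i _ => by
    have := (norm_nonneg α).trans hαD
    positivity
  rw [Fintype.card_fin, Real.mul_rpow hC0 ((norm_nonneg _).trans (hMle 0 (by simp)))] at hk
  exact ⟨k, hk⟩
end

section
/- Under the hypotheses |a_0 − b_0| ≤ |b_0|/2 and max_{0≤i≤n}|a_i − b_i| ≤ Σ_{i=0}^n |b_i/b_0|, where f(z) = Σ a_i z^{n−i}, g(z) = Σ b_i z^{n−i}, and b_0 ≠ 0, every root α of f satisfies |α| ≤ D, where D = [1 + Σ_{i=0}^n (2/|b_0|^2)(|b_0| + |b_i|)] Σ_{i=0}^n |b_i/b_0|. -/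
/-!
Cauchy's estimate: if `α` is a root of `∑ aᵢ z^(n-i)` with `‖α‖ > 1`, then
`‖a₀‖ ‖α‖ⁿ ≤ ∑_{i ≥ 1} ‖aᵢ‖ ‖α‖^(n-1)`, so `‖α‖ ≤ max 1 (∑_{i ≥ 1} ‖aᵢ‖ / ‖a₀‖)`.
With `B = ‖b₀‖` and `S = ∑ ‖bᵢ / b₀‖`, the hypotheses give `‖aᵢ‖ ≤ ‖bᵢ‖ + S`, hence
`∑_{i ≥ 1} ‖aᵢ‖ ≤ B (S - 1) + n S`, and `‖a₀‖ ≥ max (B / 2) (B - S)`: the first lower bound suffices when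
`B ≤ 2 S`, the second when `B > 2 S`.
-/

open Finset Polynomial

section CauchyBound

variable {K : Type*} [NormedDivisionRing K]

theorem norm_le_max_one_of_sum_mul_pow_eq_zero {n : ℕ} {a : ℕ → K} (ha0 : a 0 ≠ 0) {α : K}
    (h : ∑ i ∈ range (n + 1), a i * α ^ (n - i) = 0) :
    ‖α‖ ≤ max 1 ((∑ i ∈ range n, ‖a (i + 1)‖) / ‖a 0‖) := by
  rcases le_or_gt ‖α‖ 1 with hα | hα
  · exact le_max_of_le_left hα
  refine le_max_of_le_right ((le_div_iff₀' (norm_pos_iff.2 ha0)).2 ?_)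
  have hlead : a 0 * α ^ n = -∑ i ∈ range n, a (i + 1) * α ^ (n - (i + 1)) := by
    rw [sum_range_succ', Nat.sub_zero] at h
    exact eq_neg_of_add_eq_zero_right h
  refine le_of_mul_le_mul_right ?_ (by positivity : 0 < ‖α‖ ^ n)
  calc ‖a 0‖ * ‖α‖ * ‖α‖ ^ n = ‖a 0 * α ^ n‖ * ‖α‖ := by rw [norm_mul, norm_pow]; ring
    _ ≤ (∑ i ∈ range n, ‖a (i + 1)‖ * ‖α‖ ^ (n - (i + 1))) * ‖α‖ := by
        rw [hlead, norm_neg]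
        gcongr
        exact (norm_sum_le _ _).trans_eq (by simp only [norm_mul, norm_pow])
    _ = ∑ i ∈ range n, ‖a (i + 1)‖ * ‖α‖ ^ (n - (i + 1) + 1) := by
        simp only [sum_mul, pow_succ, mul_assoc]
    _ ≤ ∑ i ∈ range n, ‖a (i + 1)‖ * ‖α‖ ^ n := by
        gcongr with i hi
        · exact hα.le
        · have := mem_range.1 hi; omega
    _ = (∑ i ∈ range n, ‖a (i + 1)‖) * ‖α‖ ^ n := (sum_mul _ _ _).symm

end CauchyBound

theorem sum_norm_succ_le_of_norm_sub_le {E : Type*} [SeminormedAddCommGroup E] {n : ℕ}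
    {a b : ℕ → E} {δ : ℝ} (h : ∀ i ∈ range (n + 1), ‖a i - b i‖ ≤ δ) :
    ∑ i ∈ range n, ‖a (i + 1)‖ ≤ ∑ i ∈ range n, ‖b (i + 1)‖ + n * δ := by
  calc ∑ i ∈ range n, ‖a (i + 1)‖ ≤ ∑ i ∈ range n, (‖b (i + 1)‖ + δ) := by
        gcongr with i hi
        calc ‖a (i + 1)‖ ≤ ‖b (i + 1)‖ + ‖a (i + 1) - b (i + 1)‖ := norm_le_insert' _ _
          _ ≤ _ := by gcongr; exact h _ (by simpa using hi)
    _ = _ := by rw [sum_add_distrib, sum_const, card_range, nsmul_eq_mul]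

section NormalizedNorms

variable {K : Type*} [NormedDivisionRing K] {n : ℕ} {b : ℕ → K}

theorem sum_norm_eq_norm_mul_sum_norm_div (hb0 : b 0 ≠ 0) :
    ∑ i ∈ range (n + 1), ‖b i‖ = ‖b 0‖ * ∑ i ∈ range (n + 1), ‖b i / b 0‖ := by
  rw [mul_sum]
  refine sum_congr rfl fun i _ => ?_
  rw [norm_div, mul_div_cancel₀ _ (norm_ne_zero_iff.2 hb0)]

theorem one_le_sum_norm_div (hb0 : b 0 ≠ 0) : 1 ≤ ∑ i ∈ range (n + 1), ‖b i / b 0‖ := by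
  calc (1 : ℝ) = ‖b 0 / b 0‖ := by rw [div_self hb0, norm_one]
    _ ≤ _ := single_le_sum (f := fun i => ‖b i / b 0‖) (fun _ _ => norm_nonneg _)
        (mem_range.2 n.succ_pos)

theorem sum_norm_succ_eq_norm_mul_sub_one (hb0 : b 0 ≠ 0) :
    ∑ i ∈ range n, ‖b (i + 1)‖ = ‖b 0‖ * (∑ i ∈ range (n + 1), ‖b i / b 0‖ - 1) := by
  rw [mul_sub_one, ← sum_norm_eq_norm_mul_sum_norm_div hb0, sum_range_succ']
  ring

theorem sum_two_div_sq_mul_norm_add (hb0 : b 0 ≠ 0) :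
    ∑ i ∈ range (n + 1), 2 / ‖b 0‖ ^ 2 * (‖b 0‖ + ‖b i‖) =
      2 * (n + 1) / ‖b 0‖ + 2 * (∑ i ∈ range (n + 1), ‖b i / b 0‖) / ‖b 0‖ := by
  have hB : ‖b 0‖ ≠ 0 := norm_ne_zero_iff.2 hb0
  rw [← mul_sum, sum_add_distrib, sum_const, card_range, nsmul_eq_mul,
    sum_norm_eq_norm_mul_sum_norm_div hb0]
  push_cast
  field_simp

end NormalizedNorms

theorem mul_sub_one_div_le {A B S : ℝ} (hB : 0 < B) (hS : 1 ≤ S) (hA : B / 2 ≤ A)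
    (hA' : B - S ≤ A) : B * (S - 1) / A ≤ S + 2 * S ^ 2 / B := by
  rcases le_or_gt B (2 * S) with hBS | hBS
  · have hS_le : S ≤ 2 * S ^ 2 / B := by rw [le_div_iff₀ hB]; nlinarith
    calc B * (S - 1) / A ≤ B * (S - 1) / (B / 2) := by gcongr
      _ = 2 * (S - 1) := by field_simp
      _ ≤ S + 2 * S ^ 2 / B := by linarith
  · calc B * (S - 1) / A ≤ B * (S - 1) / (B - S) := by gcongr; linarith
      _ ≤ S + 2 * S ^ 2 / B := by
        rw [div_le_iff₀ (by linarith)]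
        have : 0 ≤ S ^ 2 * (B - 2 * S) / B := by apply div_nonneg <;> nlinarith
        calc B * (S - 1) ≤ B * S + S ^ 2 * (B - 2 * S) / B := by linarith
          _ = (S + 2 * S ^ 2 / B) * (B - S) := by field_simp; ring

theorem max_one_div_le_of_half_le_of_sub_le {A B S N T : ℝ} (hB : 0 < B) (hS : 1 ≤ S)
    (hN : 0 ≤ N) (hA : B / 2 ≤ A) (hA' : B - S ≤ A) (hT : T ≤ B * (S - 1) + N * S) :
    max 1 (T / A) ≤ (1 + 2 * (N + 1) / B + 2 * S / B) * S := by
  have hA0 : 0 < A := by linarith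
  have hNS : N * S / A ≤ 2 * N * S / B := by
    rw [div_le_div_iff₀ hA0 hB]; nlinarith [mul_nonneg hN (by linarith : (0:ℝ) ≤ S)]
  have hslack : 0 ≤ 2 * S / B := by positivity
  refine max_le (hS.trans (le_mul_of_one_le_left (by linarith) ?_)) ?_
  · have : 0 ≤ 2 * (N + 1) / B := by positivity
    linarith
  calc T / A ≤ B * (S - 1) / A + N * S / A := by rw [← add_div]; gcongr
    _ ≤ S + 2 * S ^ 2 / B + 2 * N * S / B := add_le_add (mul_sub_one_div_le hB hS hA hA') hNS
    _ ≤ (1 + 2 * (N + 1) / B + 2 * S / B) * S := by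
        have : (1 + 2 * (N + 1) / B + 2 * S / B) * S
            = S + 2 * S ^ 2 / B + 2 * N * S / B + 2 * S / B := by field_simp; ring
        linarith

theorem perturbed_root_bound_general (n : ℕ) (a b : ℕ → ℂ)
    (f : Polynomial ℂ)
    (hf : f = ∑ i ∈ Finset.range (n + 1), Polynomial.C (a i) * X ^ (n - i))
    (hb0 : b 0 ≠ 0)
    (h1 : ‖a 0 - b 0‖ ≤ ‖b 0‖ / 2)
    (h2 : (Finset.range (n + 1)).sup'
        (Finset.nonempty_range_iff.mpr (Nat.succ_ne_zero n)) (fun i => ‖a i - b i‖) ≤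
      ∑ i ∈ Finset.range (n + 1), ‖b i / b 0‖)
    (D : ℝ)
    (hD : D = (1 + ∑ i ∈ Finset.range (n + 1), 2 / ‖b 0‖ ^ 2 * (‖b 0‖ + ‖b i‖)) *
      ∑ i ∈ Finset.range (n + 1), ‖b i / b 0‖)
    (α : ℂ) (hα : f.eval α = 0) :
    ‖α‖ ≤ D := by
  set S := ∑ i ∈ range (n + 1), ‖b i / b 0‖
  have hδ : ∀ i ∈ range (n + 1), ‖a i - b i‖ ≤ S := fun i hi => (le_sup' _ hi).trans h2
  have hlead : ‖b 0‖ ≤ ‖a 0‖ + ‖a 0 - b 0‖ := by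
    simpa only [norm_sub_rev] using norm_le_insert' (b 0) (a 0)
  have hB : 0 < ‖b 0‖ := norm_pos_iff.2 hb0
  have ha0 : a 0 ≠ 0 := norm_pos_iff.1 (by linarith)
  have hroot := norm_le_max_one_of_sum_mul_pow_eq_zero ha0
    (by simpa [hf, eval_finsetSum] using hα)
  rw [hD, sum_two_div_sq_mul_norm_add hb0, ← add_assoc]
  refine le_trans hroot (max_one_div_le_of_half_le_of_sub_le hB (one_le_sum_norm_div hb0)
    n.cast_nonneg (by linarith) (by linarith [hδ 0 (by simp)]) ?_)
  rw [← sum_norm_succ_eq_norm_mul_sub_one hb0]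
  exact sum_norm_succ_le_of_norm_sub_le hδ

/-- Intermediate root bound: under the perturbation hypotheses, every root α of f
satisfies |α| ≤ D. -/
theorem perturbed_root_bound (n : ℕ) (hn : 1 ≤ n) (a b : ℕ → ℂ)
    (f g : Polynomial ℂ)
    (hf : f = ∑ i ∈ Finset.range (n + 1), Polynomial.C (a i) * X ^ (n - i))
    (hg : g = ∑ i ∈ Finset.range (n + 1), Polynomial.C (b i) * X ^ (n - i))
    (hb0 : b 0 ≠ 0)
    (h1 : ‖a 0 - b 0‖ ≤ ‖b 0‖ / 2)
    (h2 : (Finset.range (n + 1)).sup'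
        (Finset.nonempty_range_iff.mpr (Nat.succ_ne_zero n)) (fun i => ‖a i - b i‖) ≤
      ∑ i ∈ Finset.range (n + 1), ‖b i / b 0‖)
    (D : ℝ)
    (hD : D = (1 + ∑ i ∈ Finset.range (n + 1), 2 / ‖b 0‖ ^ 2 * (‖b 0‖ + ‖b i‖)) *
      ∑ i ∈ Finset.range (n + 1), ‖b i / b 0‖)
    (α : ℂ) (hα : f.eval α = 0) :
    ‖α‖ ≤ D :=
  perturbed_root_bound_general n a b f hf hb0 h1 h2 D hD α hα
end

section
/- Let B_1,…,B_m be open subsets of ℂ and let f ∈ ℂ[z_1,…,z_m] be a polynomial with f(z) ≠ 0 for all z ∈ B_1 × ⋯ × B_m. Suppose f(α) = 0 for some α ∈ closure(B_1) × ⋯ × closure(B_m) and α is not in ∂B_1 × ⋯ × ∂B_m. Then, letting S = { j : α_j ∈ B_j } (which is nonempty), f vanishes identically on the affine subspace { z ∈ ℂ^m : z_j = α_j for all j ∉ S }. -/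
open MvPolynomial Metric Set Filter Topology

/-!
Fix `z` with `z_j = α_j` for `j ∉ S` and restrict `f` to the complex line `t ↦ α + t (z - α)`,
along which only the coordinates in `S` move; for `|t| ≤ r` they stay in the open sets `B_j`.
Pushing the remaining coordinates of `α` slightly into their `B_j` gives one-variable
polynomials without zeros on the closed disc `|t| ≤ ρ < r`, so by the minimum modulus principle
each attains on the circle `|t| = ρ` a modulus at most its modulus at the centre. This survives
the limit back to `α` (a Hurwitz-type argument, via compactness of the circle), and since
`f(α) = 0` the restriction of `f` to the line has a zero on every small circle around `0`.
By the identity theorem it vanishes identically; at `t = 1` this is `f(z) = 0`.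
-/

theorem Complex.exists_mem_sphere_norm_le_of_forall_ne_zero {g : ℂ → ℂ} {c : ℂ} {ρ : ℝ}
    (hρ : 0 < ρ) (hg : DiffContOnCl ℂ g (ball c ρ)) (hg₀ : ∀ t ∈ closedBall c ρ, g t ≠ 0) :
    ∃ t ∈ sphere c ρ, ‖g t‖ ≤ ‖g c‖ := by
  have hcl : closure (ball c ρ) = closedBall c ρ := closure_ball c hρ.ne'
  obtain ⟨t, ht, hmax⟩ := Complex.exists_mem_frontier_isMaxOn_norm isBounded_ball
    ⟨c, mem_ball_self hρ⟩ (hg.inv fun t ht => hg₀ t (hcl ▸ ht))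
  rw [frontier_ball c hρ.ne'] at ht
  refine ⟨t, ht, ?_⟩
  have hle : ‖(g c)⁻¹‖ ≤ ‖(g t)⁻¹‖ := hmax (hcl ▸ mem_closedBall_self hρ.le)
  rwa [norm_inv, norm_inv, inv_le_inv₀ (norm_pos_iff.2 (hg₀ c (mem_closedBall_self hρ.le)))
    (norm_pos_iff.2 (hg₀ t (sphere_subset_closedBall ht)))] at hle

theorem exists_mem_sphere_norm_le_of_mem_closure {X : Type*} [TopologicalSpace X]
    {G : X → ℂ → ℂ} (hG : Continuous (Function.uncurry G)) {U : Set X} {c : ℂ} {ρ : ℝ}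
    (hρ : 0 < ρ) (hGU : ∀ x ∈ U, DiffContOnCl ℂ (G x) (ball c ρ))
    (hG₀ : ∀ x ∈ U, ∀ t ∈ closedBall c ρ, G x t ≠ 0) {x₀ : X} (hx₀ : x₀ ∈ closure U) :
    ∃ t ∈ sphere c ρ, ‖G x₀ t‖ ≤ ‖G x₀ c‖ := by
  have hK : IsClosed {p : X × sphere c ρ | ‖G p.1 p.2‖ ≤ ‖G p.1 c‖} :=
    isClosed_le (hG.comp (continuous_fst.prodMk (continuous_subtype_val.comp continuous_snd))).norm
      (hG.comp (continuous_fst.prodMk continuous_const)).norm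
  have hUK : U ⊆ Prod.fst '' {p : X × sphere c ρ | ‖G p.1 p.2‖ ≤ ‖G p.1 c‖} := fun x hx =>
    let ⟨t, ht, hle⟩ := Complex.exists_mem_sphere_norm_le_of_forall_ne_zero hρ (hGU x hx) (hG₀ x hx)
    ⟨(x, ⟨t, ht⟩), hle, rfl⟩
  obtain ⟨⟨x, t⟩, hle, rfl⟩ := (isClosedMap_fst_of_compactSpace _ hK).closure_subset_iff.2 hUK hx₀
  exact ⟨t, t.2, hle⟩

theorem Differentiable.eq_zero_of_forall_exists_mem_sphere_eq_zero {g : ℂ → ℂ}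
    (hg : Differentiable ℂ g) {c : ℂ} {r : ℝ} (hr : 0 < r)
    (h : ∀ ρ ∈ Ioo 0 r, ∃ t ∈ sphere c ρ, g t = 0) : g = 0 := by
  have hfreq : ∃ᶠ t in 𝓝[≠] c, g t = 0 := by
    refine (nhdsWithin_hasBasis nhds_basis_ball _).frequently_iff.2 fun ε hε => ?_
    obtain ⟨t, ht, hgt⟩ := h (min ε r / 2) ⟨by positivity, by linarith [min_le_right ε r]⟩
    rw [mem_sphere] at ht
    refine ⟨t, ⟨?_, ?_⟩, hgt⟩
    · rw [mem_ball, ht]; linarith [min_le_left ε r, lt_min hε hr]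
    · rintro rfl; rw [dist_self] at ht; linarith [lt_min hε hr]
  funext t
  exact AnalyticOnNhd.eqOn_zero_of_preconnected_of_frequently_eq_zero (fun z _ => hg.analyticAt z)
    isPreconnected_univ (mem_univ c) hfreq (mem_univ t)

theorem MvPolynomial.differentiable_eval {𝕜 σ : Type*} [NontriviallyNormedField 𝕜] [CompleteSpace 𝕜]
    [Fintype σ] (p : MvPolynomial σ 𝕜) :
    Differentiable 𝕜 (eval · p) :=
  fun x => (AnalyticOnNhd.eval_mvPolynomial p x (mem_univ x)).differentiableAt

theorem IsOpen.exists_pos_forall_mem_closedBall_add_smul_mem {𝕜 E : Type*} [NormedField 𝕜]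
    [TopologicalSpace E] [AddCommGroup E] [Module 𝕜 E] [ContinuousAdd E] [ContinuousSMul 𝕜 E]
    {W : Set E} (hW : IsOpen W) {a : E} (ha : a ∈ W) (v : E) :
    ∃ r > 0, ∀ t ∈ closedBall (0 : 𝕜) r, a + t • v ∈ W := by
  have ha₀ : a + (0 : 𝕜) • v ∈ W := by rwa [zero_smul, add_zero]
  exact nhds_basis_closedBall.mem_iff.1
    ((hW.preimage (by fun_prop : Continuous fun t : 𝕜 => a + t • v)).mem_nhds ha₀)

theorem mem_closure_pi_ite_singleton {ι : Type*} {X : ι → Type*} [∀ i, TopologicalSpace (X i)]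
    {B : ∀ i, Set (X i)} {a : ∀ i, X i} [∀ i, Decidable (a i ∈ B i)]
    (ha : ∀ i, a i ∈ closure (B i)) :
    a ∈ closure (univ.pi fun i => if a i ∈ B i then {a i} else B i) := by
  rw [closure_pi_set]
  intro i _
  dsimp only
  split_ifs
  · exact subset_closure rfl
  · exact ha i

theorem add_smul_sub_mem_pi_of_mem_pi_ite {ι 𝕜 : Type*} [Ring 𝕜] {B : ι → Set 𝕜}
    {a z β : ι → 𝕜} [∀ i, Decidable (a i ∈ B i)] {t : 𝕜} (hz : ∀ i, a i ∉ B i → z i = a i)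
    (hline : a + t • (z - a) ∈ {i | a i ∈ B i}.pi B)
    (hβ : β ∈ univ.pi fun i => if a i ∈ B i then {a i} else B i) :
    β + t • (z - a) ∈ univ.pi B := by
  intro i _
  have hβi : β i ∈ if a i ∈ B i then {a i} else B i := hβ i (mem_univ i)
  by_cases hi : a i ∈ B i
  · rw [if_pos hi, mem_singleton_iff] at hβi
    simpa [hβi] using hline i hi
  · rw [if_neg hi] at hβi
    simpa [hz i hi] using hβi

/-- Boundary zeros of Ω-stable polynomials: if f has no zeros on the product of open
sets B_j but vanishes at a point α of the product of their closures which is not in the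
product of their boundaries, then the set S of indices j with α_j ∈ B_j is nonempty and
f vanishes identically on the affine subspace { z : z_j = α_j for all j ∉ S }. -/
theorem boundary_zeros_stable (m : ℕ) (B : Fin m → Set ℂ) (hB : ∀ j, IsOpen (B j))
    (f : MvPolynomial (Fin m) ℂ)
    (hstable : ∀ z : Fin m → ℂ, (∀ j, z j ∈ B j) → MvPolynomial.eval z f ≠ 0)
    (α : Fin m → ℂ) (hα : ∀ j, α j ∈ closure (B j))
    (hzero : MvPolynomial.eval α f = 0)
    (hnotbd : ¬ ∀ j, α j ∈ frontier (B j)) :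
    (∃ j, α j ∈ B j) ∧
    ∀ z : Fin m → ℂ, (∀ j, α j ∉ B j → z j = α j) → MvPolynomial.eval z f = 0 := by
  classical
  refine ⟨?_, fun z hz => ?_⟩
  · obtain ⟨j, hj⟩ := not_forall.1 hnotbd
    exact ⟨j, (hB j).interior_eq ▸ closure_sdiff_frontier (B j) ▸ ⟨hα j, hj⟩⟩
  set G : (Fin m → ℂ) → ℂ → ℂ := fun β t => eval (β + t • (z - α)) f
  obtain ⟨r, hr, hline⟩ := (isOpen_set_pi (toFinite {j | α j ∈ B j}) fun j _ => hB j)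
    |>.exists_pos_forall_mem_closedBall_add_smul_mem (𝕜 := ℂ) (fun j (hj : α j ∈ B j) => hj) (z - α)
  have hGU : ∀ β ∈ univ.pi (fun j => if α j ∈ B j then {α j} else B j),
      ∀ t ∈ closedBall (0 : ℂ) r, G β t ≠ 0 := fun β hβ t ht =>
    hstable _ fun j => add_smul_sub_mem_pi_of_mem_pi_ite hz (hline t ht) hβ j (mem_univ j)
  have hdiff : ∀ β, Differentiable ℂ (G β) := fun β => (differentiable_eval f).comp (by fun_prop)
  have hzeros : ∀ ρ ∈ Ioo 0 r, ∃ t ∈ sphere (0 : ℂ) ρ, G α t = 0 := fun ρ hρ => by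
    have hcont : Continuous (Function.uncurry G) := (continuous_eval f).comp
      (by fun_prop : Continuous fun p : (Fin m → ℂ) × ℂ => p.1 + p.2 • (z - α))
    obtain ⟨t, ht, hle⟩ := exists_mem_sphere_norm_le_of_mem_closure hcont
      hρ.1 (fun β _ => (hdiff β).diffContOnCl)
      (fun β hβ t ht => hGU β hβ t (closedBall_subset_closedBall hρ.2.le ht))
      (mem_closure_pi_ite_singleton hα)
    exact ⟨t, ht, by simpa [G, hzero] using hle⟩
  simpa [G] using congrFun ((hdiff α).eq_zero_of_forall_exists_mem_sphere_eq_zero hr hzeros) 1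
end

section
/- Let B_1 ⊆ ℂ be open, B_2 ⊆ ℂ open, and f ∈ ℂ[z_1, z_2] with f(z_1, z_2) ≠ 0 for all (z_1, z_2) ∈ B_1 × B_2. Suppose f(α_1, α_2) = 0 with α_1 ∈ B_1 and α_2 ∈ ∂B_2. Then f(z_1, α_2) = 0 for all z_1 ∈ ℂ, i.e., the one-variable polynomial z_1 ↦ f(z_1, α_2) is identically zero. -/
/-!
This is Hurwitz's theorem. If the slice `g = f(·, α₂)` were not identically zero, its zero `α₁`
would be isolated, so `‖g‖` is bounded below on a small circle around `α₁` inside `B₁`. For `β ∈ B₂`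
close enough to `α₂` the slice `f(·, β)` is uniformly close to `g` on the closed disc, and by the
minimum modulus principle it must vanish in the disc, contradicting stability on `B₁ × B₂`.
-/

open Metric Filter Topology

theorem DiffContOnCl.exists_mem_closedBall_eq_zero {h : ℂ → ℂ} {c : ℂ} {r a : ℝ}
    (hh : DiffContOnCl ℂ h (ball c r)) (hr : 0 < r) (hc : ‖h c‖ < a)
    (hsphere : ∀ z ∈ sphere c r, a ≤ ‖h z‖) : ∃ z ∈ closedBall c r, h z = 0 := by
  -- Otherwise the maximum modulus principle for `1 / h` contradicts `‖h c‖ < a`.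
  by_contra! hne
  have ha : 0 < a := (norm_nonneg _).trans_lt hc
  have hinv : DiffContOnCl ℂ (fun z ↦ (h z)⁻¹) (ball c r) :=
    hh.inv fun z hz ↦ hne z (closure_ball_subset_closedBall hz)
  have hmax : ‖(h c)⁻¹‖ ≤ a⁻¹ := by
    refine Complex.norm_le_of_forall_mem_frontier_norm_le isBounded_ball hinv (fun z hz ↦ ?_)
      (subset_closure (mem_ball_self hr))
    rw [frontier_ball c hr.ne'] at hz
    rw [norm_inv]
    exact inv_anti₀ ha (hsphere z hz)
  rw [norm_inv, inv_le_inv₀ (norm_pos_iff.mpr (hne c (mem_closedBall_self hr.le))) ha] at hmax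
  exact hmax.not_gt hc

/-- Hurwitz's theorem near an isolated zero of `g`. -/
theorem exists_closedBall_forall_exists_zero_of_norm_sub_lt {g : ℂ → ℂ} {c : ℂ} {U : Set ℂ}
    (hg : Continuous g) (hgc : g c = 0) (hiso : ∀ᶠ z in 𝓝[≠] c, g z ≠ 0) (hU : U ∈ 𝓝 c) :
    ∃ r > 0, closedBall c r ⊆ U ∧ ∃ ε > 0, ∀ h : ℂ → ℂ, DiffContOnCl ℂ h (ball c r) →
      (∀ z ∈ closedBall c r, ‖h z - g z‖ < ε) → ∃ z ∈ closedBall c r, h z = 0 := by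
  obtain ⟨r, hr, hrsub⟩ := nhds_basis_closedBall.mem_iff.mp
    (inter_mem hU (eventually_nhdsWithin_iff.mp hiso))
  obtain ⟨zm, hzm, hmin⟩ := (isCompact_sphere c r).exists_isMinOn
    (NormedSpace.sphere_nonempty.mpr hr.le) hg.norm.continuousOn
  have hm : 0 < ‖g zm‖ := by
    have hzm_ne : zm ≠ c := ne_of_mem_sphere hzm hr.ne'
    exact norm_pos_iff.mpr ((hrsub (sphere_subset_closedBall hzm)).2 hzm_ne)
  refine ⟨r, hr, fun z hz ↦ (hrsub hz).1, ‖g zm‖ / 2, half_pos hm, fun h hh hclose ↦ ?_⟩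
  refine hh.exists_mem_closedBall_eq_zero hr (a := ‖g zm‖ / 2) ?_ fun z hz ↦ ?_
  · simpa [hgc] using hclose c (mem_closedBall_self hr.le)
  · have hz_close := hclose z (sphere_subset_closedBall hz)
    have hz_min : ‖g zm‖ ≤ ‖g z‖ := hmin hz
    have := norm_sub_norm_le (g z) (h z)
    rw [norm_sub_rev] at this
    linarith

theorem Continuous.eventually_forall_norm_sub_lt {X Y E : Type*} [TopologicalSpace X]
    [TopologicalSpace Y] [SeminormedAddCommGroup E] {F : X → Y → E}
    (hF : Continuous (Function.uncurry F))
    {K : Set Y} (hK : IsCompact K) (x₀ : X) {ε : ℝ} (hε : 0 < ε) :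
    ∀ᶠ x in 𝓝 x₀, ∀ y ∈ K, ‖F x y - F x₀ y‖ < ε := by
  obtain ⟨v, hv, hvK⟩ := hK.mem_uniformity_of_prod hF.continuousOn (Set.mem_univ x₀)
    (dist_mem_uniformity hε)
  rw [nhdsWithin_univ] at hv
  filter_upwards [hv] with x hx y hy
  simpa [dist_eq_norm] using hvK x hx y hy

theorem MvPolynomial.analyticOnNhd_eval_vecCons {𝕜 : Type*} [NontriviallyNormedField 𝕜]
    (p : MvPolynomial (Fin 2) 𝕜) (w : 𝕜) :
    AnalyticOnNhd 𝕜 (fun z ↦ eval ![z, w] p) Set.univ := by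
  have hcoord : ∀ i, AnalyticOnNhd 𝕜 (fun z : 𝕜 ↦ ![z, w] i) Set.univ := by
    intro i
    fin_cases i
    · exact analyticOnNhd_id
    · exact analyticOnNhd_const
  simpa [MvPolynomial.coe_aeval_eq_eval] using
    AnalyticOnNhd.aeval_mvPolynomial (𝕜 := 𝕜) (B := 𝕜) (A := 𝕜) hcoord p

theorem MvPolynomial.continuous_uncurry_eval_vecCons {R : Type*} [CommSemiring R]
    [TopologicalSpace R] [IsTopologicalSemiring R] (p : MvPolynomial (Fin 2) R) :
    Continuous (Function.uncurry fun w z : R ↦ eval ![z, w] p) :=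
  (continuous_eval p).comp
    (continuous_snd.matrixVecCons (continuous_fst.matrixVecCons continuous_const))

theorem boundary_zeros_two_variables_general (B₁ B₂ : Set ℂ) (hB₁ : IsOpen B₁)
    (f : MvPolynomial (Fin 2) ℂ)
    (hstable : ∀ z₁ z₂ : ℂ, z₁ ∈ B₁ → z₂ ∈ B₂ → MvPolynomial.eval ![z₁, z₂] f ≠ 0)
    (α₁ α₂ : ℂ) (hα₁ : α₁ ∈ B₁) (hα₂ : α₂ ∈ frontier B₂)
    (hzero : MvPolynomial.eval ![α₁, α₂] f = 0) :
    ∀ z₁ : ℂ, MvPolynomial.eval ![z₁, α₂] f = 0 := by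
  by_contra! ⟨w, hw⟩
  have hslice := f.analyticOnNhd_eval_vecCons α₂
  have hiso : ∀ᶠ z in 𝓝[≠] α₁, MvPolynomial.eval ![z, α₂] f ≠ 0 := by
    refine Filter.not_frequently.mp fun hfreq ↦ hw ?_
    exact congrFun (hslice.eq_of_frequently_eq analyticOnNhd_const hfreq) w
  obtain ⟨r, -, hrB₁, ε, hε, hzero_of_close⟩ :=
    exists_closedBall_forall_exists_zero_of_norm_sub_lt hslice.continuous hzero hiso
      (hB₁.mem_nhds hα₁)
  have hnear : ∀ᶠ β in 𝓝 α₂, ∀ z ∈ closedBall α₁ r,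
      ‖MvPolynomial.eval ![z, β] f - MvPolynomial.eval ![z, α₂] f‖ < ε :=
    f.continuous_uncurry_eval_vecCons.eventually_forall_norm_sub_lt
      (isCompact_closedBall α₁ r) α₂ hε
  obtain ⟨β, hβ_close, hβB₂⟩ := (hnear.and_frequently
    (mem_closure_iff_frequently.mp (frontier_subset_closure hα₂))).exists
  obtain ⟨z, hz, hz_zero⟩ := hzero_of_close _
    ((f.analyticOnNhd_eval_vecCons β).differentiableOn.mono (Set.subset_univ _)).diffContOnCl
    hβ_close
  exact hstable z β (hrB₁ hz) hβB₂ hz_zero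

/-- Two-variable special case of the boundary-zeros theorem: if f(z₁,z₂) ≠ 0 on
B₁ × B₂ and f(α₁, α₂) = 0 with α₁ ∈ B₁ and α₂ ∈ ∂B₂, then f(z₁, α₂) = 0 for all z₁. -/
theorem boundary_zeros_two_variables (B₁ B₂ : Set ℂ) (hB₁ : IsOpen B₁) (hB₂ : IsOpen B₂)
    (f : MvPolynomial (Fin 2) ℂ)
    (hstable : ∀ z₁ z₂ : ℂ, z₁ ∈ B₁ → z₂ ∈ B₂ → MvPolynomial.eval ![z₁, z₂] f ≠ 0)
    (α₁ α₂ : ℂ) (hα₁ : α₁ ∈ B₁) (hα₂ : α₂ ∈ frontier B₂)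
    (hzero : MvPolynomial.eval ![α₁, α₂] f = 0) :
    ∀ z₁ : ℂ, MvPolynomial.eval ![z₁, α₂] f = 0 :=
  boundary_zeros_two_variables_general B₁ B₂ hB₁ f hstable α₁ α₂ hα₁ hα₂ hzero
end
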